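/- arXiv:1007.4707 — 8 statements merged into one kernel-verified Lean document; each statement's English description precedes it below -/
import Mathlib

section
/- Let τ⁰ be a pheromone vector and x ∈ {0,1}ⁿ a fixed bit string, and for every t ≥ 0 let τ^{t+1} be the pheromone update of τ^t with respect to x. Then for every natural number t ≥ (ln n)/ρ and every index j we have τ^t_j = 1 − 1/n if x_j = 1 and τ^t_j = 1/n if x_j = 0. (That is, repeatedly reinforcing the same solution for at least (ln n)/ρ iterations freezes every pheromone at its border.) -/
/-- Repeatedly reinforcing the same solution `x` for at least `(ln n)/ρ` iterations
freezes every pheromone at its border. -/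
theorem stmt_0 (n : ℕ) (hn : 2 ≤ n) (ρ : ℝ) (hρ0 : 0 < ρ) (hρ1 : ρ < 1)
    (x : Fin n → Bool) (τ : ℕ → Fin n → ℝ)
    (hbounds : ∀ j, 1 / (n : ℝ) ≤ τ 0 j ∧ τ 0 j ≤ 1 - 1 / (n : ℝ))
    (hupd : ∀ t j, τ (t + 1) j =
      if x j then min ((1 - ρ) * τ t j + ρ) (1 - 1 / (n : ℝ))
      else max ((1 - ρ) * τ t j) (1 / (n : ℝ))) :
    ∀ t : ℕ, Real.log n / ρ ≤ (t : ℝ) →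
      ∀ j, τ t j = if x j then 1 - 1 / (n : ℝ) else 1 / (n : ℝ) := by
  have hn0 : (0:ℝ) < n := by positivity
  have h1n : (0:ℝ) < 1 / n := by positivity
  have h1n1 : (1:ℝ) / n ≤ 1 - 1 / n := by
    have hn2 : (2:ℝ) ≤ n := by exact_mod_cast hn
    have : (1:ℝ) / n ≤ 1 / 2 := by
      apply one_div_le_one_div_of_le <;> linarith
    linarith
  have hρ' : (0:ℝ) ≤ 1 - ρ := by linarith
  -- closed form for x j = false
  have key0 : ∀ t j, x j = false → τ t j = max ((1-ρ)^t * τ 0 j) (1 / n) := by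
    intro t
    induction t with
    | zero =>
      intro j hj
      simp only [pow_zero, one_mul]
      exact (max_eq_left (hbounds j).1).symm
    | succ t ih =>
      intro j hj
      rw [hupd t j, if_neg (by simp [hj]), ih j hj, mul_max_of_nonneg _ _ hρ',
        max_assoc]
      have h2 : max ((1-ρ) * (1/n)) (1/n) = 1/n := by
        apply max_eq_right
        nlinarith
      rw [h2, ← mul_assoc, ← pow_succ']
  -- closed form for x j = true
  have key1 : ∀ t j, x j = true → 1 - τ t j = max ((1-ρ)^t * (1 - τ 0 j)) (1 / n) := by
    intro t
    induction t with
    | zero =>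
      intro j hj
      simp only [pow_zero, one_mul]
      have := (hbounds j).2
      exact (max_eq_left (by linarith)).symm
    | succ t ih =>
      intro j hj
      rw [hupd t j, if_pos (by simp [hj])]
      have hmin : 1 - min ((1 - ρ) * τ t j + ρ) (1 - 1 / (n:ℝ))
          = max ((1-ρ) * (1 - τ t j)) (1 / n) := by
        rcases le_total ((1 - ρ) * τ t j + ρ) (1 - 1 / (n:ℝ)) with h | h
        · rw [min_eq_left h, max_eq_left (by nlinarith)]
          ring
        · rw [min_eq_right h, max_eq_right (by nlinarith)]
          ring
      rw [hmin, ih j hj, mul_max_of_nonneg _ _ hρ', max_assoc]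
      have h2 : max ((1-ρ) * (1/n)) (1/n) = 1/n := by
        apply max_eq_right
        nlinarith
      rw [h2, ← mul_assoc, ← pow_succ']
  -- decay estimate
  have hdecay : ∀ t : ℕ, Real.log n / ρ ≤ (t:ℝ) → (1-ρ)^t ≤ 1 / n := by
    intro t ht
    have h1 : (1-ρ) ≤ Real.exp (-ρ) := by
      have := Real.add_one_le_exp (-ρ); linarith
    have h2 : (1-ρ)^t ≤ (Real.exp (-ρ))^t := pow_le_pow_left₀ hρ' h1 t
    have h3 : (Real.exp (-ρ))^t = Real.exp ((t:ℝ) * (-ρ)) := by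
      rw [← Real.exp_nat_mul]
    have h4 : (t:ℝ) * (-ρ) ≤ - Real.log n := by
      rw [div_le_iff₀ hρ0] at ht; nlinarith
    have h5 : Real.exp ((t:ℝ) * (-ρ)) ≤ Real.exp (- Real.log n) := Real.exp_le_exp.2 h4
    have h6 : Real.exp (- Real.log n) = 1 / n := by
      rw [Real.exp_neg, Real.exp_log hn0, one_div]
    calc (1-ρ)^t ≤ (Real.exp (-ρ))^t := h2
      _ = Real.exp ((t:ℝ) * (-ρ)) := h3
      _ ≤ Real.exp (- Real.log n) := h5
      _ = 1 / n := h6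
  intro t ht j
  have hdec := hdecay t ht
  have hpow0 : (0:ℝ) ≤ (1-ρ)^t := pow_nonneg hρ' t
  cases hx : x j with
  | false =>
    rw [if_neg (by simp), key0 t j hx]
    apply max_eq_right
    have h1 := (hbounds j).1
    have h2 := (hbounds j).2
    calc (1-ρ)^t * τ 0 j ≤ (1/n) * 1 :=
          mul_le_mul hdec (by linarith) (by linarith) (le_of_lt h1n)
      _ = 1/n := mul_one _
  | true =>
    rw [if_pos (by simp)]
    have h := key1 t j hx
    have h1 := (hbounds j).1
    have h2 := (hbounds j).2
    have : max ((1-ρ)^t * (1 - τ 0 j)) (1 / n) = 1/n := by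
      apply max_eq_right
      calc (1-ρ)^t * (1 - τ 0 j) ≤ (1/n) * 1 :=
            mul_le_mul hdec (by linarith) (by linarith) (le_of_lt h1n)
        _ = 1/n := mul_one _
    rw [this] at h
    linarith
end

section
/- Let f be a linear pseudo-Boolean function with sorted positive weights and fix 0 ≤ i ≤ n. Let τ⁰ be a pheromone vector, let x⁰, x¹, x², … be bit strings with f(x^t) ≥ f(a_i) for every t, and let τ^{t+1} be the pheromone update of τ^t with respect to x^t. Define h(s) = (1−ρ)s + ρ, let h^t denote the t-fold iterate of h, and define the capped-out pheromones τ^{cap,t}_j = min(h^t(1/n), τ^t_j). Then for every t with h^t(1/n) ≤ 1 − 1/n we have f(τ^{cap,t}) ≥ h^t(1/n) · f(a_i). -/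
/-- `fval w x` is the value of the linear pseudo-Boolean function with weights `w`
on the bit string `x`. -/
noncomputable def fval {n : ℕ} (w : Fin n → ℝ) (x : Fin n → Bool) : ℝ :=
  ∑ j, w j * (if x j then 1 else 0)

/-- `fA w i = f(a_i) = Σ_{j=1}^i w_j`, the value of the linear function on the bit
string `a_i` whose first `i` bits are 1 and whose remaining bits are 0. -/
noncomputable def fA {n : ℕ} (w : Fin n → ℝ) (i : ℕ) : ℝ :=
  ∑ j, w j * (if (j : ℕ) < i then 1 else 0)

/-!
The cap `c_t = h^t(1/n)` obeys the same affine recursion `c_{t+1} = (1-ρ) c_t + ρ` as a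
reinforced pheromone. So while `c_{t+1} ≤ 1 - 1/n` the upper border never binds, and every
capped pheromone satisfies `min(c_{t+1}, τ^{t+1}_j) ≥ (1-ρ) min(c_t, τ^t_j) + ρ x^t_j`.
Weighting with `w` and using `f(x^t) ≥ f(a_i)` gives
`f(τ^{cap,t+1}) - c_{t+1} f(a_i) ≥ (1-ρ) (f(τ^{cap,t}) - c_t f(a_i))`, and the claim follows by
induction from `c_0 = 1/n ≤ τ^0_j`. The hypothesis `c_t ≤ 1 - 1/n` passes down the induction
because `c_t ≤ 1`, hence `c_t ≤ c_{t+1}`.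
-/

section AffineIterate

variable {ρ : ℝ}

lemma le_affine_of_le_one (hρ : 0 ≤ ρ) {s : ℝ} (hs : s ≤ 1) : s ≤ (1 - ρ) * s + ρ := by
  nlinarith

lemma affine_iterate_le_one (hρ : ρ ≤ 1) {s : ℝ} (hs : s ≤ 1) (t : ℕ) :
    (fun s : ℝ => (1 - ρ) * s + ρ)^[t] s ≤ 1 := by
  induction t with
  | zero => exact hs
  | succ t ih => rw [Function.iterate_succ_apply']; nlinarith

end AffineIterate

lemma affine_min_add_le_min_update {ρ c τ L U : ℝ} (b : Bool) (hρ0 : 0 ≤ ρ) (hρ1 : ρ ≤ 1)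
    (hcU : (1 - ρ) * c + ρ ≤ U) :
    (1 - ρ) * min c τ + ρ * (if b then 1 else 0) ≤
      min ((1 - ρ) * c + ρ) (if b then min ((1 - ρ) * τ + ρ) U else max ((1 - ρ) * τ) L) := by
  have hmin_c : (1 - ρ) * min c τ ≤ (1 - ρ) * c :=
    mul_le_mul_of_nonneg_left (min_le_left _ _) (by linarith)
  have hmin_τ : (1 - ρ) * min c τ ≤ (1 - ρ) * τ :=
    mul_le_mul_of_nonneg_left (min_le_right _ _) (by linarith)
  cases b
  · simp only [Bool.false_eq_true, ↓reduceIte, mul_zero, add_zero]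
    exact le_min (by linarith) (le_max_of_le_left hmin_τ)
  · simp only [↓reduceIte, mul_one]
    exact le_min (by linarith) (le_min (by linarith) (by linarith))

section CappedPheromones

variable {n : ℕ} {w : Fin n → ℝ}

lemma fA_le_sum_weights (hw : ∀ j, 0 ≤ w j) (i : ℕ) : fA w i ≤ ∑ j, w j :=
  Finset.sum_le_sum fun j _ => by split_ifs <;> simp [hw j]

lemma mul_fA_le_sum_min_of_le {c : ℝ} {τ : Fin n → ℝ} (hw : ∀ j, 0 ≤ w j) (hc : 0 ≤ c)
    (hcτ : ∀ j, c ≤ τ j) (i : ℕ) : c * fA w i ≤ ∑ j, w j * min c (τ j) :=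
  calc c * fA w i ≤ c * ∑ j, w j := mul_le_mul_of_nonneg_left (fA_le_sum_weights hw i) hc
    _ = ∑ j, w j * min c (τ j) := by
      rw [Finset.mul_sum]
      exact Finset.sum_congr rfl fun j _ => by rw [min_eq_left (hcτ j), mul_comm]

lemma sum_min_update_ge {ρ c L U : ℝ} {x : Fin n → Bool} {τ τ' : Fin n → ℝ}
    (hρ0 : 0 ≤ ρ) (hρ1 : ρ ≤ 1) (hw : ∀ j, 0 ≤ w j) (hcU : (1 - ρ) * c + ρ ≤ U)
    (hτ' : ∀ j, τ' j = if x j then min ((1 - ρ) * τ j + ρ) U else max ((1 - ρ) * τ j) L) :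
    (1 - ρ) * ∑ j, w j * min c (τ j) + ρ * fval w x ≤
      ∑ j, w j * min ((1 - ρ) * c + ρ) (τ' j) := by
  rw [fval, Finset.mul_sum, Finset.mul_sum, ← Finset.sum_add_distrib]
  refine Finset.sum_le_sum fun j _ => ?_
  calc _ = w j * ((1 - ρ) * min c (τ j) + ρ * if x j then 1 else 0) := by ring
    _ ≤ _ := by
      rw [hτ' j]
      exact mul_le_mul_of_nonneg_left
        (affine_min_add_le_min_update (x j) hρ0 hρ1 hcU) (hw j)

lemma mul_fA_le_sum_min_update {ρ c L U : ℝ} {i : ℕ} {x : Fin n → Bool} {τ τ' : Fin n → ℝ}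
    (hρ0 : 0 ≤ ρ) (hρ1 : ρ ≤ 1) (hw : ∀ j, 0 ≤ w j) (hcU : (1 - ρ) * c + ρ ≤ U)
    (hτ' : ∀ j, τ' j = if x j then min ((1 - ρ) * τ j + ρ) U else max ((1 - ρ) * τ j) L)
    (hfit : fA w i ≤ fval w x) (hcap : c * fA w i ≤ ∑ j, w j * min c (τ j)) :
    ((1 - ρ) * c + ρ) * fA w i ≤ ∑ j, w j * min ((1 - ρ) * c + ρ) (τ' j) :=
  calc ((1 - ρ) * c + ρ) * fA w i = (1 - ρ) * (c * fA w i) + ρ * fA w i := by ring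
    _ ≤ (1 - ρ) * ∑ j, w j * min c (τ j) + ρ * fval w x :=
      add_le_add (mul_le_mul_of_nonneg_left hcap (by linarith))
        (mul_le_mul_of_nonneg_left hfit hρ0)
    _ ≤ _ := sum_min_update_ge hρ0 hρ1 hw hcU hτ'

end CappedPheromones

theorem stmt_1_general (n : ℕ) (ρ : ℝ) (hρ0 : 0 < ρ) (hρ1 : ρ < 1)
    (w : Fin n → ℝ) (hwpos : ∀ j, 0 < w j)
    (i : ℕ)
    (x : ℕ → Fin n → Bool) (τ : ℕ → Fin n → ℝ)
    (hbounds : ∀ j, 1 / (n : ℝ) ≤ τ 0 j ∧ τ 0 j ≤ 1 - 1 / (n : ℝ))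
    (hupd : ∀ t j, τ (t + 1) j =
      if x t j then min ((1 - ρ) * τ t j + ρ) (1 - 1 / (n : ℝ))
      else max ((1 - ρ) * τ t j) (1 / (n : ℝ)))
    (hfit : ∀ t, fA w i ≤ fval w (x t)) :
    ∀ t : ℕ, (fun s : ℝ => (1 - ρ) * s + ρ)^[t] (1 / (n : ℝ)) ≤ 1 - 1 / (n : ℝ) →
      (fun s : ℝ => (1 - ρ) * s + ρ)^[t] (1 / (n : ℝ)) * fA w i ≤
        ∑ j, w j * min ((fun s : ℝ => (1 - ρ) * s + ρ)^[t] (1 / (n : ℝ))) (τ t j) := by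
  have hw : ∀ j, 0 ≤ w j := fun j => (hwpos j).le
  have hcap_le_one : ∀ t, (fun s : ℝ => (1 - ρ) * s + ρ)^[t] (1 / (n : ℝ)) ≤ 1 :=
    affine_iterate_le_one hρ1.le (by simpa using Nat.cast_inv_le_one n)
  intro t
  induction t with
  | zero =>
    intro _
    exact mul_fA_le_sum_min_of_le hw (by positivity) (fun j => (hbounds j).1) i
  | succ t ih =>
    intro hle
    rw [Function.iterate_succ_apply'] at hle ⊢
    exact mul_fA_le_sum_min_update hρ0.le hρ1.le hw hle (hupd t) (hfit t)
      (ih ((le_affine_of_le_one hρ0.le (hcap_le_one t)).trans hle))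

/-- If every best-so-far solution is at least as good as `a_i`, then the capped-out
pheromones `τ^{cap,t}_j = min(h^t(1/n), τ^t_j)` satisfy
`f(τ^{cap,t}) ≥ h^t(1/n) · f(a_i)` for every `t` with `h^t(1/n) ≤ 1 - 1/n`,
where `h(s) = (1-ρ)s + ρ`. -/
theorem stmt_1 (n : ℕ) (hn : 2 ≤ n) (ρ : ℝ) (hρ0 : 0 < ρ) (hρ1 : ρ < 1)
    (w : Fin n → ℝ) (hwpos : ∀ j, 0 < w j)
    (hwsorted : ∀ j k : Fin n, j ≤ k → w k ≤ w j)
    (i : ℕ) (hi : i ≤ n)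
    (x : ℕ → Fin n → Bool) (τ : ℕ → Fin n → ℝ)
    (hbounds : ∀ j, 1 / (n : ℝ) ≤ τ 0 j ∧ τ 0 j ≤ 1 - 1 / (n : ℝ))
    (hupd : ∀ t j, τ (t + 1) j =
      if x t j then min ((1 - ρ) * τ t j + ρ) (1 - 1 / (n : ℝ))
      else max ((1 - ρ) * τ t j) (1 / (n : ℝ)))
    (hfit : ∀ t, fA w i ≤ fval w (x t)) :
    ∀ t : ℕ, (fun s : ℝ => (1 - ρ) * s + ρ)^[t] (1 / (n : ℝ)) ≤ 1 - 1 / (n : ℝ) →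
      (fun s : ℝ => (1 - ρ) * s + ρ)^[t] (1 / (n : ℝ)) * fA w i ≤
        ∑ j, w j * min ((fun s : ℝ => (1 - ρ) * s + ρ)^[t] (1 / (n : ℝ))) (τ t j) :=
  stmt_1_general n ρ hρ0 hρ1 w hwpos i x τ hbounds hupd hfit
end

section
/- Let 0 ≤ i < j ≤ n. Let τ be a pheromone vector with v(a_i) ≤ f(τ) < v(a_{i+1}), where f(τ) = Σ_k τ_k is the OneMax extension, let x ∈ {0,1}ⁿ be a bit string with at least j ones, and let τ⁺ be the pheromone update of τ with respect to x. Then f(τ⁺) ≥ v(a_{i+1}) holds, or both f(τ⁺) ≥ α_i + (f(τ) − α_i)(1−ρ) + (j−i)ρ and f(τ⁺) ≥ v(a_i) hold. -/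
/-!
Let `B` be the set of reinforced coordinates capped at the upper border `1 - 1/n`. If `|B| > i`,
the coordinates in `B` end at `1 - 1/n` and all others stay at least `1/n`, so the updated sum is
at least `v(a_{|B|}) ≥ v(a_{i+1})`. Otherwise the borders cost at most `|B| ρ/n ≤ i ρ/n` against the
unbordered update `(1 - ρ)τ + ρx`, whose sum is `(1 - ρ) f(τ) + ρ |x|₁ ≥ (1 - ρ) f(τ) + ρ j`; this
is exactly the claimed drift, and since `j ≥ i + 1` the drift cannot fall below `v(a_i)`.
-/


/-- `alpha n i = α_i = i(1 - 1/n)`. -/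
noncomputable def alpha (n i : ℕ) : ℝ := (i : ℝ) * (1 - 1 / (n : ℝ))

/-- `vA n i = v(a_i) = i(1 - 1/n) + (n - i)/n` (the OneMax weighted pheromone sum of
the bordered pheromone vector corresponding to `a_i`). -/
noncomputable def vA (n i : ℕ) : ℝ :=
  (i : ℝ) * (1 - 1 / (n : ℝ)) + ((n : ℝ) - (i : ℝ)) / (n : ℝ)

open Finset

section PheromoneUpdate

variable {ι : Type*} (ρ ℓ u : ℝ) (τ : ι → ℝ) (x : ι → Bool)

noncomputable def pheromoneUpdate : ι → ℝ := fun k =>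
  if x k then min ((1 - ρ) * τ k + ρ) u else max ((1 - ρ) * τ k) ℓ

noncomputable def cappedSet [Fintype ι] : Finset ι :=
  univ.filter fun k => x k = true ∧ u < (1 - ρ) * τ k + ρ

variable {ρ ℓ u τ x}

theorem le_pheromoneUpdate (hρ0 : 0 ≤ ρ) (hρ1 : ρ ≤ 1) (hℓu : ℓ ≤ u) (hℓ1 : ℓ ≤ 1) {k : ι}
    (hτ : ℓ ≤ τ k) : ℓ ≤ pheromoneUpdate ρ ℓ u τ x k := by
  unfold pheromoneUpdate
  split_ifs
  · exact le_min (by nlinarith) hℓu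
  · exact le_max_right _ _

variable [Fintype ι]

theorem pheromoneUpdate_of_mem_cappedSet {k : ι} (hk : k ∈ cappedSet ρ u τ x) :
    pheromoneUpdate ρ ℓ u τ x k = u := by
  obtain ⟨-, hxk, hcap⟩ := mem_filter.1 hk
  simp only [pheromoneUpdate, hxk, if_true, min_eq_right hcap.le]

variable [DecidableEq ι]

theorem card_cappedSet_mul_add_le_sum_pheromoneUpdate (hρ0 : 0 ≤ ρ) (hρ1 : ρ ≤ 1)
    (hℓu : ℓ ≤ u) (hℓ1 : ℓ ≤ 1) (hτ : ∀ k, ℓ ≤ τ k) :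
    #(cappedSet ρ u τ x) * u + (Fintype.card ι - #(cappedSet ρ u τ x)) * ℓ ≤
      ∑ k, pheromoneUpdate ρ ℓ u τ x k := by
  set B := cappedSet ρ u τ x
  have hcard : (Fintype.card ι : ℝ) - #B = #Bᶜ := by
    rw [card_compl, Nat.cast_sub (card_le_univ B)]
  have hB : ∑ k ∈ B, pheromoneUpdate ρ ℓ u τ x k = #B * u := by
    rw [sum_congr rfl fun k hk => pheromoneUpdate_of_mem_cappedSet hk, sum_const, nsmul_eq_mul]
  have hBc : #Bᶜ * ℓ ≤ ∑ k ∈ Bᶜ, pheromoneUpdate ρ ℓ u τ x k := by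
    simpa only [nsmul_eq_mul] using
      card_nsmul_le_sum Bᶜ _ ℓ fun k _ => le_pheromoneUpdate hρ0 hρ1 hℓu hℓ1 (hτ k)
  rw [← sum_add_sum_compl B, hB, hcard]
  linarith

theorem linear_sub_cap_le_pheromoneUpdate (hρ1 : ρ ≤ 1) {k : ι} (hτ : τ k ≤ u) :
    (1 - ρ) * τ k + (if x k then ρ else 0) - (if k ∈ cappedSet ρ u τ x then ρ * (1 - u) else 0)
      ≤ pheromoneUpdate ρ ℓ u τ x k := by
  by_cases hk : k ∈ cappedSet ρ u τ x
  · obtain ⟨-, hxk, -⟩ := mem_filter.1 hk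
    rw [pheromoneUpdate_of_mem_cappedSet hk, if_pos hxk, if_pos hk]
    nlinarith
  · have hcap : x k = true → (1 - ρ) * τ k + ρ ≤ u := fun hxk =>
      not_lt.1 fun h => hk (mem_filter.2 ⟨mem_univ k, hxk, h⟩)
    rw [if_neg hk, pheromoneUpdate]
    split_ifs with hxk
    · rw [min_eq_left (hcap hxk)]; linarith
    · linarith [le_max_left ((1 - ρ) * τ k) ℓ]

theorem sum_linear_sub_cap_le_sum_pheromoneUpdate (hρ1 : ρ ≤ 1) (hτ : ∀ k, τ k ≤ u) :
    (1 - ρ) * ∑ k, τ k + ρ * #(univ.filter fun k => x k = true)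
        - ρ * (1 - u) * #(cappedSet ρ u τ x) ≤ ∑ k, pheromoneUpdate ρ ℓ u τ x k := by
  calc (1 - ρ) * ∑ k, τ k + ρ * #(univ.filter fun k => x k = true)
        - ρ * (1 - u) * #(cappedSet ρ u τ x)
      = ∑ k, ((1 - ρ) * τ k + (if x k then ρ else 0)
          - (if k ∈ cappedSet ρ u τ x then ρ * (1 - u) else 0)) := by
        rw [sum_sub_distrib, sum_add_distrib, ← mul_sum, sum_ite_mem, univ_inter, sum_ite,
          sum_const_zero, add_zero, sum_const, sum_const, nsmul_eq_mul, nsmul_eq_mul]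
        ring
    _ ≤ ∑ k, pheromoneUpdate ρ ℓ u τ x k :=
        sum_le_sum fun k _ => linear_sub_cap_le_pheromoneUpdate hρ1 (hτ k)

end PheromoneUpdate

theorem vA_le_vA {n i j : ℕ} (hn : 2 ≤ n) (hij : i ≤ j) : vA n i ≤ vA n j := by
  have hn' : (2 : ℝ) ≤ n := by exact_mod_cast hn
  have hij' : (i : ℝ) ≤ j := by exact_mod_cast hij
  have hvA : ∀ m : ℕ, vA n m = 1 + m * (1 - 2 / n) := fun m => by
    unfold vA; field_simp; ring
  have h2n : 0 ≤ 1 - 2 / (n : ℝ) := sub_nonneg.2 ((div_le_one (by linarith)).2 hn')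
  rw [hvA, hvA]
  nlinarith

theorem vA_le_drift {n i j : ℕ} {ρ f : ℝ} (hρ0 : 0 ≤ ρ) (hρ1 : ρ ≤ 1) (hij : i < j)
    (hf : vA n i ≤ f) : vA n i ≤ alpha n i + (f - alpha n i) * (1 - ρ) + ((j : ℝ) - i) * ρ := by
  have hgap : vA n i - alpha n i ≤ 1 := by
    simp only [vA, alpha, add_sub_cancel_left]
    exact div_le_one_of_le₀ (by simp) (Nat.cast_nonneg n)
  have hij' : (i : ℝ) + 1 ≤ j := by exact_mod_cast hij
  nlinarith

theorem stmt_4_general (n : ℕ) (hn : 2 ≤ n) (ρ : ℝ) (hρ0 : 0 < ρ) (hρ1 : ρ < 1)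
    (i j : ℕ) (hij : i < j)
    (τ τplus : Fin n → ℝ)
    (hbounds : ∀ k, 1 / (n : ℝ) ≤ τ k ∧ τ k ≤ 1 - 1 / (n : ℝ))
    (x : Fin n → Bool)
    (hx : j ≤ (Finset.univ.filter (fun k => x k = true)).card)
    (hlow : vA n i ≤ ∑ k, τ k)
    (hupd : ∀ k, τplus k =
      if x k then min ((1 - ρ) * τ k + ρ) (1 - 1 / (n : ℝ))
      else max ((1 - ρ) * τ k) (1 / (n : ℝ))) :
    vA n (i + 1) ≤ ∑ k, τplus k ∨
      (alpha n i + ((∑ k, τ k) - alpha n i) * (1 - ρ) + ((j : ℝ) - (i : ℝ)) * ρ ≤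
          ∑ k, τplus k ∧
        vA n i ≤ ∑ k, τplus k) := by
  obtain rfl : τplus = pheromoneUpdate ρ (1 / n) (1 - 1 / n) τ x := funext hupd
  have hn' : (2 : ℝ) ≤ n := by exact_mod_cast hn
  have h1n : 1 / (n : ℝ) ≤ 1 - 1 / n := by
    rw [le_sub_iff_add_le, ← add_div, div_le_one (by linarith)]; linarith
  set B := cappedSet ρ (1 - 1 / n) τ x
  rcases le_or_gt (i + 1) #B with hB | hB
  · left
    calc vA n (i + 1) ≤ vA n #B := vA_le_vA hn hB
      _ = #B * (1 - 1 / n) + (Fintype.card (Fin n) - #B) * (1 / n) := by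
        rw [vA, Fintype.card_fin, mul_one_div]
      _ ≤ _ := card_cappedSet_mul_add_le_sum_pheromoneUpdate hρ0.le hρ1.le h1n
          (by linarith [h1n]) fun k => (hbounds k).1
  · right
    have hsum := sum_linear_sub_cap_le_sum_pheromoneUpdate (ℓ := 1 / n) (x := x) hρ1.le
      fun k => (hbounds k).2
    have hSj : (j : ℝ) ≤ #(univ.filter fun k => x k = true) := by exact_mod_cast hx
    have hBi : (#B : ℝ) ≤ i := by exact_mod_cast Nat.lt_succ_iff.1 hB
    have hdrift : alpha n i + ((∑ k, τ k) - alpha n i) * (1 - ρ) + ((j : ℝ) - i) * ρ ≤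
        ∑ k, pheromoneUpdate ρ (1 / n) (1 - 1 / n) τ x k := by
      simp only [alpha, sub_sub_cancel] at hsum ⊢
      nlinarith [mul_nonneg hρ0.le (div_nonneg zero_le_one (Nat.cast_nonneg n : (0 : ℝ) ≤ n))]
    exact ⟨hdrift, (vA_le_drift hρ0.le hρ1.le hij hlow).trans hdrift⟩

/-- One-step pheromone drift for OneMax: if `v(a_i) ≤ f(τ) < v(a_{i+1})` and the
reinforced solution has at least `j > i` ones, then after one pheromone update either
`f(τ⁺) ≥ v(a_{i+1})`, or both `f(τ⁺) ≥ α_i + (f(τ) - α_i)(1-ρ) + (j-i)ρ` and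
`f(τ⁺) ≥ v(a_i)` hold. -/
theorem stmt_4 (n : ℕ) (hn : 2 ≤ n) (ρ : ℝ) (hρ0 : 0 < ρ) (hρ1 : ρ < 1)
    (i j : ℕ) (hij : i < j) (hjn : j ≤ n)
    (τ τplus : Fin n → ℝ)
    (hbounds : ∀ k, 1 / (n : ℝ) ≤ τ k ∧ τ k ≤ 1 - 1 / (n : ℝ))
    (x : Fin n → Bool)
    (hx : j ≤ (Finset.univ.filter (fun k => x k = true)).card)
    (hlow : vA n i ≤ ∑ k, τ k) (hhigh : ∑ k, τ k < vA n (i + 1))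
    (hupd : ∀ k, τplus k =
      if x k then min ((1 - ρ) * τ k + ρ) (1 - 1 / (n : ℝ))
      else max ((1 - ρ) * τ k) (1 / (n : ℝ))) :
    vA n (i + 1) ≤ ∑ k, τplus k ∨
      (alpha n i + ((∑ k, τ k) - alpha n i) * (1 - ρ) + ((j : ℝ) - (i : ℝ)) * ρ ≤
          ∑ k, τplus k ∧
        vA n i ≤ ∑ k, τplus k) :=
  stmt_4_general n hn ρ hρ0 hρ1 i j hij τ τplus hbounds x hx hlow hupd
end

section
/- Let 0 ≤ i < n, let τ be a pheromone vector with Σ_k τ_k ≥ v(a_i), let x ∈ {0,1}ⁿ be a bit string with at least i+1 ones, and let τ⁺ be the pheromone update of τ with respect to x. Then Σ_k τ⁺_k ≥ v(a_i). (Once the pheromone sum has reached v(a_i), it can never drop below v(a_i) as long as solutions with more than i ones are reinforced.) -/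
/-- Once the pheromone sum has reached `v(a_i)`, it never drops below `v(a_i)` as long
as solutions with more than `i` ones are reinforced. -/
theorem stmt_5 (n : ℕ) (hn : 2 ≤ n) (ρ : ℝ) (hρ0 : 0 < ρ) (hρ1 : ρ < 1)
    (i : ℕ) (hi : i < n)
    (τ τplus : Fin n → ℝ)
    (hbounds : ∀ k, 1 / (n : ℝ) ≤ τ k ∧ τ k ≤ 1 - 1 / (n : ℝ))
    (x : Fin n → Bool)
    (hx : i + 1 ≤ (Finset.univ.filter (fun k => x k = true)).card)
    (hlow : vA n i ≤ ∑ k, τ k)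
    (hupd : ∀ k, τplus k =
      if x k then min ((1 - ρ) * τ k + ρ) (1 - 1 / (n : ℝ))
      else max ((1 - ρ) * τ k) (1 / (n : ℝ))) :
    vA n i ≤ ∑ k, τplus k := by
  have hN : (2:ℝ) ≤ (n:ℝ) := by exact_mod_cast hn
  have hN0 : (0:ℝ) < (n:ℝ) := by linarith
  have h12 : 1 / (n:ℝ) ≤ 1/2 := one_div_le_one_div_of_le (by norm_num) hN
  have hinv : 1 / (n:ℝ) ≤ 1 - 1 / (n:ℝ) := by linarith
  rcases Nat.eq_zero_or_pos i with hi0 | hi1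
  · subst hi0
    have hlb : ∀ k, 1 / (n:ℝ) ≤ τplus k := by
      intro k
      rw [hupd k]
      rcases (hbounds k) with ⟨h1, h2⟩
      by_cases hxk : x k = true
      · simp only [hxk, if_true]
        apply le_min _ hinv
        nlinarith [h12]
      · simp only [hxk, if_false]
        exact le_max_right _ _
    have : vA n 0 = ∑ _k : Fin n, 1 / (n:ℝ) := by
      simp [vA, Finset.sum_const]
      field_simp
    rw [this]
    exact Finset.sum_le_sum fun k _ => hlb k
  · have key : ∀ k, (1 - ρ) * τ k + (if x k = true then ρ * (1 - 1/(n:ℝ)) else 0) ≤ τplus k := by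
      intro k
      rw [hupd k]
      rcases (hbounds k) with ⟨h1, h2⟩
      by_cases hxk : x k = true
      · simp only [hxk, if_true]
        apply le_min
        · nlinarith [div_pos one_pos hN0]
        · nlinarith
      · simp only [hxk, if_false]
        simpa using le_max_left ((1-ρ) * τ k) (1/(n:ℝ))
    have hsum : ∑ k, ((1 - ρ) * τ k + (if x k = true then ρ * (1 - 1/(n:ℝ)) else 0))
        ≤ ∑ k, τplus k := Finset.sum_le_sum fun k _ => key k
    set m := (Finset.univ.filter (fun k : Fin n => x k = true)).card with hm
    have hite : ∑ k : Fin n, (if x k = true then ρ * (1 - 1/(n:ℝ)) else 0)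
        = (m : ℝ) * (ρ * (1 - 1/(n:ℝ))) := by
      rw [← Finset.sum_filter, Finset.sum_const, nsmul_eq_mul]
    rw [Finset.sum_add_distrib, ← Finset.mul_sum, hite] at hsum
    have hmi : (i:ℝ) + 1 ≤ (m:ℝ) := by exact_mod_cast hx
    have hi1' : (1:ℝ) ≤ (i:ℝ) := by exact_mod_cast hi1
    have hin : (i:ℝ) < (n:ℝ) := by exact_mod_cast hi
    have hv : vA n i = (i : ℝ) * (1 - 1 / (n : ℝ)) + ((n : ℝ) - (i : ℝ)) / (n : ℝ) := rfl
    have hρn : ρ * (1 - 1/(n:ℝ)) > 0 := by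
      have : 1/(n:ℝ) < 1 := by
        rw [div_lt_one hN0]; linarith
      nlinarith
    have hfrac : ((n:ℝ) - (i:ℝ)) / (n:ℝ) ≤ 1 - 1/(n:ℝ) := by
      rw [div_le_iff₀ hN0]
      have h1 : (1 - 1/(n:ℝ)) * (n:ℝ) = (n:ℝ) - 1 := by field_simp
      rw [h1]; linarith
    nlinarith [hsum, hlow, mul_le_mul_of_nonneg_left hmi (le_of_lt hρn),
      mul_nonneg (le_of_lt hρn) (sub_nonneg.mpr hi1')]
end

section
/- Let 0 ≤ i < j ≤ n. Let τ⁰ be a pheromone vector with v(a_i) ≤ Σ_k τ⁰_k < v(a_{i+1}), let x⁰, x¹, x², … be bit strings each having at least j ones, and let τ^{t+1} be the pheromone update of τ^t with respect to x^t. Then for every t ≥ 0: Σ_k τ^t_k ≥ v(a_{i+1}), or Σ_k τ^t_k − α_i ≥ (j − i)(1 − (1−ρ)^t). -/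
set_option maxHeartbeats 1000000 in
/-- Multi-step pheromone drift for OneMax: if `v(a_i) ≤ f(τ⁰) < v(a_{i+1})` and every
reinforced solution has at least `j > i` ones, then after `t` iterations either
`f(τ^t) ≥ v(a_{i+1})` or `f(τ^t) - α_i ≥ (j - i)(1 - (1-ρ)^t)`. -/
theorem stmt_6 (n : ℕ) (hn : 2 ≤ n) (ρ : ℝ) (hρ0 : 0 < ρ) (hρ1 : ρ < 1)
    (i j : ℕ) (hij : i < j) (hjn : j ≤ n)
    (x : ℕ → Fin n → Bool) (τ : ℕ → Fin n → ℝ)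
    (hbounds : ∀ k, 1 / (n : ℝ) ≤ τ 0 k ∧ τ 0 k ≤ 1 - 1 / (n : ℝ))
    (hx : ∀ t, j ≤ (Finset.univ.filter (fun k => x t k = true)).card)
    (hlow : vA n i ≤ ∑ k, τ 0 k) (hhigh : ∑ k, τ 0 k < vA n (i + 1))
    (hupd : ∀ t k, τ (t + 1) k =
      if x t k then min ((1 - ρ) * τ t k + ρ) (1 - 1 / (n : ℝ))
      else max ((1 - ρ) * τ t k) (1 / (n : ℝ))) :
    ∀ t : ℕ, vA n (i + 1) ≤ ∑ k, τ t k ∨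
      ((j : ℝ) - (i : ℝ)) * (1 - (1 - ρ) ^ t) ≤ (∑ k, τ t k) - alpha n i := by
  classical
  have hn0 : 0 < n := by omega
  have hN0 : (0:ℝ) < (n:ℝ) := by exact_mod_cast hn0
  have hN2 : (2:ℝ) ≤ (n:ℝ) := by exact_mod_cast hn
  have h1n0 : (0:ℝ) < 1 / (n:ℝ) := by positivity
  have hhalf : 1 / (n:ℝ) ≤ 1 - 1 / (n:ℝ) := by
    rw [le_sub_iff_add_le]
    have h : 1 / (n:ℝ) + 1 / (n:ℝ) = 2 / (n:ℝ) := by ring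
    rw [h, div_le_one hN0]; exact hN2
  have h1ρ : (0:ℝ) ≤ 1 - ρ := by linarith
  -- the invariant: pheromones stay within borders
  have hinv : ∀ t k, 1 / (n:ℝ) ≤ τ t k ∧ τ t k ≤ 1 - 1 / (n:ℝ) := by
    intro t
    induction t with
    | zero => exact hbounds
    | succ t ih =>
      intro k
      rw [hupd t k]
      obtain ⟨h1, h2⟩ := ih k
      by_cases hx' : x t k = true
      · simp only [hx', if_true]
        refine ⟨le_min (by nlinarith) hhalf, min_le_right _ _⟩
      · simp only [hx', if_false]
        refine ⟨le_max_right _ _, max_le (by nlinarith) hhalf⟩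
  -- one-step drift
  have hstep : ∀ t, vA n (i+1) ≤ ∑ k, τ (t+1) k ∨
      (1-ρ) * (∑ k, τ t k) + ρ * (alpha n i + ((j:ℝ) - (i:ℝ))) ≤ ∑ k, τ (t+1) k := by
    intro t
    set A : Finset (Fin n) :=
      Finset.univ.filter (fun k => x t k = true ∧ 1 - 1/(n:ℝ) < (1-ρ) * τ t k + ρ) with hAdef
    by_cases hcard : i + 1 ≤ A.card
    · -- many capped components: sum already exceeds vA n (i+1)
      left
      have hsplit := Finset.sum_filter_add_sum_filter_not Finset.univ
        (fun k => x t k = true ∧ 1 - 1/(n:ℝ) < (1-ρ) * τ t k + ρ) (τ (t+1))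
      have hAval : ∀ k ∈ A, τ (t+1) k = 1 - 1/(n:ℝ) := by
        intro k hk
        rw [hAdef, Finset.mem_filter] at hk
        obtain ⟨-, hx', hcap⟩ := hk
        rw [hupd t k]
        simp only [hx', if_true]
        exact min_eq_right hcap.le
      have hsumA : ∑ k ∈ A, τ (t+1) k = (A.card : ℝ) * (1 - 1/(n:ℝ)) := by
        rw [Finset.sum_congr rfl hAval, Finset.sum_const, nsmul_eq_mul]
      set B := Finset.univ.filter
        (fun k => ¬(x t k = true ∧ 1 - 1/(n:ℝ) < (1-ρ) * τ t k + ρ)) with hBdef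
      have hsumB : (B.card : ℝ) * (1/(n:ℝ)) ≤ ∑ k ∈ B, τ (t+1) k := by
        rw [← nsmul_eq_mul, ← Finset.sum_const]
        exact Finset.sum_le_sum (fun k _ => (hinv (t+1) k).1)
      have hcards : A.card + B.card = n := by
        rw [hAdef, hBdef, Finset.card_filter_add_card_filter_not]
        simp
      have hAn : (A.card : ℝ) + (B.card : ℝ) = (n:ℝ) := by exact_mod_cast hcards
      have hAi : ((i:ℝ) + 1) ≤ (A.card : ℝ) := by exact_mod_cast hcard
      have htot : (A.card : ℝ) * (1 - 1/(n:ℝ)) + (B.card : ℝ) * (1/(n:ℝ)) ≤ ∑ k, τ (t+1) k := by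
        calc (A.card : ℝ) * (1 - 1/(n:ℝ)) + (B.card : ℝ) * (1/(n:ℝ))
            ≤ ∑ k ∈ A, τ (t+1) k + ∑ k ∈ B, τ (t+1) k := by
              rw [hsumA]; linarith
          _ = ∑ k, τ (t+1) k := hsplit
      have h2n : (0:ℝ) ≤ 1 - 2 * (1/(n:ℝ)) := by linarith
      have hdiv : ((n:ℝ) - ((i:ℝ)+1))/(n:ℝ) = ((n:ℝ) - ((i:ℝ)+1)) * (1/(n:ℝ)) := by ring
      unfold vA
      push_cast
      nlinarith [mul_nonneg (by linarith : (0:ℝ) ≤ (A.card:ℝ) - ((i:ℝ)+1)) h2n, hdiv, hAn, htot]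
    · -- few capped components: good drift
      right
      push_neg at hcard
      have hAi : (A.card : ℝ) ≤ (i:ℝ) := by exact_mod_cast Nat.lt_succ_iff.mp hcard
      set S := Finset.univ.filter (fun k => x t k = true) with hSdef
      have hSj : (j:ℝ) ≤ (S.card : ℝ) := by exact_mod_cast hx t
      -- pointwise bound
      have hpt : ∀ k : Fin n,
          (1-ρ) * τ t k + ρ * ((if x t k = true then (1:ℝ) else 0)
            - (if k ∈ A then 1/(n:ℝ) else 0)) ≤ τ (t+1) k := by
        intro k
        rw [hupd t k]
        obtain ⟨h1, h2⟩ := hinv t k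
        by_cases hx' : x t k = true
        · simp only [hx', if_true]
          by_cases hcap : 1 - 1/(n:ℝ) < (1-ρ) * τ t k + ρ
          · have hkA : k ∈ A := by
              rw [hAdef, Finset.mem_filter]; exact ⟨Finset.mem_univ k, hx', hcap⟩
            simp only [hkA, if_true]
            rw [min_eq_right hcap.le]
            nlinarith
          · have hkA : k ∉ A := by
              rw [hAdef, Finset.mem_filter]; tauto
            simp only [hkA, if_false]
            rw [min_eq_left (not_lt.mp hcap)]
            ring_nf
            nlinarith
        · have hkA : k ∉ A := by
            rw [hAdef, Finset.mem_filter]; tauto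
          simp only [hkA, if_false, if_neg hx']
          have := le_max_left ((1-ρ) * τ t k) (1/(n:ℝ))
          nlinarith
      have hsum : ∑ k, ((1-ρ) * τ t k + ρ * ((if x t k = true then (1:ℝ) else 0)
            - (if k ∈ A then 1/(n:ℝ) else 0))) ≤ ∑ k, τ (t+1) k :=
        Finset.sum_le_sum (fun k _ => hpt k)
      have hs1 : ∑ k : Fin n, (if x t k = true then (1:ℝ) else 0) = (S.card : ℝ) := by
        rw [hSdef]; simp [Finset.sum_boole]
      have hs2 : ∑ k : Fin n, (if k ∈ A then (1/(n:ℝ)) else 0) = (A.card : ℝ) * (1/(n:ℝ)) := by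
        rw [Finset.sum_ite_mem, Finset.univ_inter, Finset.sum_const, nsmul_eq_mul]
      have hexp : ∑ k, ((1-ρ) * τ t k + ρ * ((if x t k = true then (1:ℝ) else 0)
            - (if k ∈ A then 1/(n:ℝ) else 0)))
          = (1-ρ) * (∑ k, τ t k) + ρ * ((S.card : ℝ) - (A.card : ℝ) * (1/(n:ℝ))) := by
        rw [← hs1, ← hs2]
        rw [Finset.sum_add_distrib, Finset.mul_sum, ← Finset.sum_sub_distrib, Finset.mul_sum]
      rw [hexp] at hsum
      have hkey : alpha n i + ((j:ℝ) - (i:ℝ)) ≤ (S.card : ℝ) - (A.card : ℝ) * (1/(n:ℝ)) := by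
        unfold alpha
        have hin : (A.card : ℝ) * (1/(n:ℝ)) ≤ (i:ℝ) * (1/(n:ℝ)) :=
          mul_le_mul_of_nonneg_right hAi h1n0.le
        nlinarith
      nlinarith [mul_le_mul_of_nonneg_left hkey hρ0.le]
  -- main induction
  intro t
  induction t with
  | zero =>
    right
    simp only [pow_zero, sub_self, mul_zero]
    have hiN : (i:ℝ) ≤ (n:ℝ) := by exact_mod_cast le_of_lt (lt_of_lt_of_le hij hjn)
    have h0 : (0:ℝ) ≤ ((n:ℝ) - (i:ℝ)) / (n:ℝ) := div_nonneg (by linarith) hN0.le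
    have hlow' := hlow
    unfold vA at hlow'
    unfold alpha
    linarith
  | succ t ih =>
    have hji : (0:ℝ) ≤ (j:ℝ) - (i:ℝ) := by
      have : (i:ℝ) ≤ (j:ℝ) := by exact_mod_cast hij.le
      linarith
    have hpow : (0:ℝ) ≤ (1-ρ)^(t+1) := pow_nonneg h1ρ _
    have hps : (1-ρ)^(t+1) = (1-ρ)^t * (1-ρ) := pow_succ _ _
    rcases hstep t with h | h
    · left; exact h
    rcases ih with h0 | h0
    · by_cases hc : vA n (i+1) ≤ alpha n i + ((j:ℝ) - (i:ℝ))
      · left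
        nlinarith [mul_le_mul_of_nonneg_left h0 h1ρ, mul_le_mul_of_nonneg_left hc hρ0.le]
      · right
        push_neg at hc
        have h1 : (1-ρ) * vA n (i+1) ≤ (1-ρ) * (∑ k, τ t k) :=
          mul_le_mul_of_nonneg_left h0 h1ρ
        have h2 : (1-ρ) * (alpha n i + ((j:ℝ) - (i:ℝ))) ≤ (1-ρ) * vA n (i+1) :=
          mul_le_mul_of_nonneg_left hc.le h1ρ
        nlinarith [mul_nonneg hji hpow]
    · right
      nlinarith [mul_le_mul_of_nonneg_left h0 h1ρ]
end

section
/- There is a constant c > 0 such that the following holds for every integer n ≥ 2, every ρ ∈ (0,1), every integer ℓ ≥ 1, every 1 ≤ i ≤ n, and every pheromone vector τ: if there are i distinct indices j_1, …, j_i with τ_{j_k} ≥ min(1 − 1/n, 1 − (1−ρ)^{kℓ}) for all 1 ≤ k ≤ i (i.e., these bits form an (i,ℓ)-layer), then Π_{k=1}^i τ_{j_k} ≥ c · e^{−5/(ℓρ)}. Equivalently, under the sampling distribution P_τ the probability that all i layer bits are simultaneously set to 1 is at least c · e^{−5/(ℓρ)}. -/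
/-!
Bounding each layer pheromone from below by `(1 - 1/n) (1 - x^k)` with `x = (1-ρ)^ℓ` reduces
the claim to `(1 - 1/n)^n ≥ e⁻²` and to a lower bound for the partial Euler products
`∏ (1 - x^k)`. Expanding `-log (1 - x^k) = ∑ₘ x^{km}/m` and summing over `k` first gives
`-log ∏ (1 - x^k) ≤ ∑ₘ x^m / (m (1 - x^m)) ≤ ∑ₘ 1 / (m² (1 - x)) = π² / (6 (1 - x))`,
and Bernoulli's inequality gives `1 / (1 - x) ≤ 1 + 1/(ℓρ)`.
-/

open Real Finset

lemma pow_mul_one_add_mul_one_sub_le_one {x : ℝ} (hx : 0 ≤ x) (K : ℕ) :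
    x ^ K * (1 + K * (1 - x)) ≤ 1 :=
  calc x ^ K * (1 + K * (1 - x)) ≤ x ^ K * exp (K * (1 - x)) :=
        mul_le_mul_of_nonneg_left (by linarith [add_one_le_exp (K * (1 - x))]) (by positivity)
    _ ≤ exp (x - 1) ^ K * exp (K * (1 - x)) :=
        mul_le_mul_of_nonneg_right
          (pow_le_pow_left₀ hx (by linarith [add_one_le_exp (x - 1)]) K) (exp_pos _).le
    _ = 1 := by rw [← exp_nat_mul, ← exp_add]; ring_nf; exact exp_zero

lemma sum_pow_pow_succ_le {x : ℝ} (hx0 : 0 ≤ x) (hx1 : x < 1) (m i : ℕ) :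
    ∑ k ∈ range i, (x ^ (m + 1)) ^ (k + 1) ≤ 1 / ((m + 1) * (1 - x)) := by
  set y := x ^ (m + 1)
  have hy0 : 0 ≤ y := by positivity
  have hy1 : y < 1 := pow_lt_one₀ hx0 hx1 (by omega)
  have hbernoulli := pow_mul_one_add_mul_one_sub_le_one hx0 (m + 1)
  push_cast at hbernoulli
  calc ∑ k ∈ range i, y ^ (k + 1) = ∑ k ∈ Ico 1 (i + 1), y ^ k := by
        rw [sum_Ico_eq_sum_range]; simp only [add_tsub_cancel_right, add_comm]
    _ ≤ y ^ 1 / (1 - y) := geom_sum_Ico_le_of_lt_one hy0 hy1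
    _ ≤ 1 / ((m + 1) * (1 - x)) := by
        rw [pow_one, div_le_div_iff₀ (by linarith) (by nlinarith)]
        linarith

lemma sum_neg_log_one_sub_pow_le {x : ℝ} (hx0 : 0 ≤ x) (hx1 : x < 1) (i : ℕ) :
    ∑ k ∈ range i, -log (1 - x ^ (k + 1)) ≤ π ^ 2 / 6 / (1 - x) := by
  have hlog : HasSum (fun m : ℕ => ∑ k ∈ range i, (x ^ (k + 1)) ^ (m + 1) / (m + 1))
      (∑ k ∈ range i, -log (1 - x ^ (k + 1))) :=
    hasSum_sum fun k _ => hasSum_pow_div_log_of_abs_lt_one <| by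
      rw [abs_of_nonneg (by positivity)]; exact pow_lt_one₀ hx0 hx1 (by omega)
  have hzeta : HasSum (fun m : ℕ => 1 / ((m + 1 : ℝ) ^ 2) / (1 - x)) (π ^ 2 / 6 / (1 - x)) := by
    simpa using ((hasSum_nat_add_iff' 1).mpr hasSum_zeta_two).div_const (1 - x)
  refine hasSum_le (fun m => ?_) hlog hzeta
  calc ∑ k ∈ range i, (x ^ (k + 1)) ^ (m + 1) / (m + 1)
      = (∑ k ∈ range i, (x ^ (m + 1)) ^ (k + 1)) / (m + 1) := by
        rw [sum_div]; simp only [← pow_mul, mul_comm]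
    _ ≤ 1 / ((m + 1) * (1 - x)) / (m + 1) := by
        gcongr; exact sum_pow_pow_succ_le hx0 hx1 m i
    _ = 1 / ((m + 1 : ℝ) ^ 2) / (1 - x) := by rw [div_div, div_div]; congr 1; ring

lemma exp_neg_le_prod_one_sub_pow {x : ℝ} (hx0 : 0 ≤ x) (hx1 : x < 1) (i : ℕ) :
    exp (-(π ^ 2 / 6 / (1 - x))) ≤ ∏ k ∈ range i, (1 - x ^ (k + 1)) := by
  have hpos (k : ℕ) : 0 < 1 - x ^ (k + 1) := sub_pos.2 (pow_lt_one₀ hx0 hx1 (by omega))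
  rw [← prod_congr rfl fun k _ => exp_log (hpos k), ← exp_sum]
  gcongr
  linarith [sum_neg_log_one_sub_pow_le hx0 hx1 i, sum_neg_distrib (s := range i)
    (f := fun k => log (1 - x ^ (k + 1)))]

lemma one_div_one_sub_one_sub_pow_le {ρ : ℝ} (hρ1 : ρ ≤ 1) {ℓ : ℕ} (hℓρ : 0 < ℓ * ρ) :
    1 / (1 - (1 - ρ) ^ ℓ) ≤ 1 / (ℓ * ρ) + 1 := by
  have hbernoulli := pow_mul_one_add_mul_one_sub_le_one (sub_nonneg.2 hρ1) ℓ
  rw [sub_sub_cancel] at hbernoulli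
  have hpos : 0 < 1 - (1 - ρ) ^ ℓ := by nlinarith [pow_nonneg (sub_nonneg.2 hρ1) ℓ]
  rw [div_le_iff₀ hpos, div_add_one hℓρ.ne', div_mul_eq_mul_div, le_div_iff₀ hℓρ]
  linarith

lemma exp_neg_two_mul_le_one_sub {t : ℝ} (ht0 : 0 ≤ t) (ht : t ≤ 1 / 2) :
    exp (-(2 * t)) ≤ 1 - t := by
  rw [exp_neg, inv_le_iff_one_le_mul₀ (exp_pos _)]
  calc (1 : ℝ) ≤ (1 - t) * (2 * t + 1) := by nlinarith
    _ ≤ (1 - t) * exp (2 * t) :=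
        mul_le_mul_of_nonneg_left (add_one_le_exp _) (by linarith)

lemma exp_neg_two_le_one_sub_inv_pow {n : ℕ} (hn : 2 ≤ n) :
    exp (-2) ≤ (1 - 1 / (n : ℝ)) ^ n := by
  have hn' : (2 : ℝ) ≤ n := by exact_mod_cast hn
  calc exp (-2) = exp (-(2 * (1 / n))) ^ n := by
        rw [← exp_nat_mul]; field_simp
    _ ≤ (1 - 1 / (n : ℝ)) ^ n := by
        gcongr
        exact exp_neg_two_mul_le_one_sub (by positivity)
          (by rw [div_le_div_iff₀ (by positivity) two_pos]; linarith)

lemma exp_neg_le_prod_one_sub_one_sub_pow {ρ : ℝ} (hρ1 : ρ ≤ 1) {ℓ : ℕ} (hℓρ : 0 < ℓ * ρ)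
    (i : ℕ) :
    exp (-(π ^ 2 / 6)) * exp (-(π ^ 2 / 6 / (ℓ * ρ))) ≤
      ∏ k ∈ range i, (1 - ((1 - ρ) ^ ℓ) ^ (k + 1)) := by
  have hx0 : 0 ≤ (1 - ρ) ^ ℓ := pow_nonneg (sub_nonneg.2 hρ1) ℓ
  have hx1 : (1 - ρ) ^ ℓ < 1 := by
    nlinarith [sub_sub_cancel (1 : ℝ) ρ ▸ pow_mul_one_add_mul_one_sub_le_one (sub_nonneg.2 hρ1) ℓ]
  refine le_trans ?_ (exp_neg_le_prod_one_sub_pow hx0 hx1 i)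
  rw [← exp_add, exp_le_exp, ← neg_add, neg_le_neg_iff]
  calc π ^ 2 / 6 / (1 - (1 - ρ) ^ ℓ) = π ^ 2 / 6 * (1 / (1 - (1 - ρ) ^ ℓ)) := by ring
    _ ≤ π ^ 2 / 6 * (1 / (ℓ * ρ) + 1) := by
        gcongr; exact one_div_one_sub_one_sub_pow_le hρ1 hℓρ
    _ = π ^ 2 / 6 + π ^ 2 / 6 / (ℓ * ρ) := by ring

lemma pow_mul_prod_one_sub_pow_le_prod {a x : ℝ} (ha0 : 0 ≤ a) (ha1 : a ≤ 1) (hx0 : 0 ≤ x)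
    (hx1 : x ≤ 1) {i : ℕ} {f : Fin i → ℝ} (hf : ∀ k : Fin i, min a (1 - x ^ ((k : ℕ) + 1)) ≤ f k) :
    a ^ i * ∏ k ∈ range i, (1 - x ^ (k + 1)) ≤ ∏ k, f k := by
  have hb0 (k : ℕ) : 0 ≤ 1 - x ^ (k + 1) := sub_nonneg.2 (pow_le_one₀ hx0 hx1)
  have hb1 (k : ℕ) : 1 - x ^ (k + 1) ≤ 1 := sub_le_self _ (pow_nonneg hx0 _)
  have hsplit : a ^ i * ∏ k ∈ range i, (1 - x ^ (k + 1)) =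
      ∏ k : Fin i, a * (1 - x ^ ((k : ℕ) + 1)) := by
    rw [prod_mul_distrib, prod_const, card_univ, Fintype.card_fin,
      Fin.prod_univ_eq_prod_range (fun k => 1 - x ^ (k + 1))]
  rw [hsplit]
  refine prod_le_prod (fun k _ => mul_nonneg ha0 (hb0 k)) fun k _ => le_trans ?_ (hf k)
  exact le_min (mul_le_of_le_one_right ha0 (hb1 k)) (mul_le_of_le_one_left (hb0 k) ha1)

/-- If `i` distinct bits form an `(i, ℓ)`-layer, i.e. the `k`-th of these bits has
pheromone at least `min(1 - 1/n, 1 - (1-ρ)^{kℓ})`, then the probability that all `i`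
layer bits are simultaneously set to 1 (the product of their pheromones) is
`Ω(e^{-5/(ℓρ)})`, with a constant independent of all parameters. -/
theorem stmt_7 : ∃ c : ℝ, 0 < c ∧
    ∀ (n : ℕ), 2 ≤ n → ∀ (ρ : ℝ), 0 < ρ → ρ < 1 →
    ∀ (ℓ : ℕ), 1 ≤ ℓ → ∀ (i : ℕ), 1 ≤ i → i ≤ n →
    ∀ (τ : Fin n → ℝ), (∀ j, 1 / (n : ℝ) ≤ τ j ∧ τ j ≤ 1 - 1 / (n : ℝ)) →
    ∀ (js : Fin i → Fin n), Function.Injective js →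
    (∀ k : Fin i, min (1 - 1 / (n : ℝ)) (1 - (1 - ρ) ^ (((k : ℕ) + 1) * ℓ)) ≤ τ (js k)) →
    c * Real.exp (-5 / ((ℓ : ℝ) * ρ)) ≤ ∏ k, τ (js k) := by
  refine ⟨exp (-2) * exp (-(π ^ 2 / 6)), by positivity, ?_⟩
  intro n hn ρ hρ0 hρ1 ℓ hℓ i _ hin τ _ js _ hlayer
  have hℓρ : 0 < (ℓ : ℝ) * ρ := mul_pos (by exact_mod_cast hℓ) hρ0
  have ha0 : 0 ≤ 1 - 1 / (n : ℝ) := by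
    rw [sub_nonneg, div_le_one (by positivity)]; exact_mod_cast (by omega)
  have ha1 : 1 - 1 / (n : ℝ) ≤ 1 := sub_le_self _ (by positivity)
  have hlayer' (k : Fin i) :
      min (1 - 1 / (n : ℝ)) (1 - ((1 - ρ) ^ ℓ) ^ ((k : ℕ) + 1)) ≤ τ (js k) := by
    rw [← pow_mul, mul_comm]; exact hlayer k
  have hπ : π ^ 2 / 6 ≤ 5 := by nlinarith [pi_le_four, pi_pos]
  calc exp (-2) * exp (-(π ^ 2 / 6)) * exp (-5 / (ℓ * ρ))
      ≤ (1 - 1 / (n : ℝ)) ^ i * (exp (-(π ^ 2 / 6)) * exp (-(π ^ 2 / 6 / (ℓ * ρ)))) := by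
        rw [mul_assoc, neg_div]
        gcongr
        exact (exp_neg_two_le_one_sub_inv_pow hn).trans (pow_le_pow_of_le_one ha0 ha1 hin)
    _ ≤ (1 - 1 / (n : ℝ)) ^ i * ∏ k ∈ range i, (1 - ((1 - ρ) ^ ℓ) ^ (k + 1)) := by
        gcongr; exact exp_neg_le_prod_one_sub_one_sub_pow hρ1.le hℓρ i
    _ ≤ ∏ k, τ (js k) :=
        pow_mul_prod_one_sub_pow_le_prod ha0 ha1 (pow_nonneg (by linarith) ℓ)
          (pow_le_one₀ (by linarith) (by linarith)) hlayer'
end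

section
/- Let f be a linear pseudo-Boolean function with sorted positive weights, let τ be a pheromone vector, and let P_τ be its sampling distribution. Fix 0 ≤ i < n and a bit string x* with f(a_i) ≤ f(x*) < f(a_{i+1}). Let G = {x ∈ {0,1}ⁿ : f(x) ≥ f(a_{i+1})} and B = {x ∈ {0,1}ⁿ : f(x*) ≤ f(x) < f(a_{i+1})}. Then P_τ(G) ≥ P_τ(B)/n². (Sampling a solution on a strictly higher fitness level is at least 1/n² times as likely as sampling an equally good or better solution on the same level.) -/
open scoped Classical

/-- `prob τ S` is the probability of the event `S` under the product Bernoulli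
distribution in which bit `j` equals 1 with probability `τ j`. -/
noncomputable def prob {n : ℕ} (τ : Fin n → ℝ) (S : Finset (Fin n → Bool)) : ℝ :=
  ∑ x ∈ S, ∏ j, (if x j then τ j else 1 - τ j)

lemma fA_succ {n : ℕ} (w : Fin n → ℝ) (i : ℕ) (hi : i < n) :
    fA w (i + 1) = fA w i + w ⟨i, hi⟩ := by
  unfold fA
  have key : ∀ j : Fin n, w j * (if (j : ℕ) < i + 1 then 1 else 0)
      = w j * (if (j : ℕ) < i then 1 else 0) + (if j = ⟨i, hi⟩ then w j else 0) := by
    intro j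
    rcases lt_trichotomy (j : ℕ) i with h | h | h
    · have h1 : (j : ℕ) < i + 1 := by omega
      have h2 : j ≠ ⟨i, hi⟩ := by simp [Fin.ext_iff]; omega
      simp [h, h1, h2]
    · have h1 : (j : ℕ) < i + 1 := by omega
      have h2 : j = ⟨i, hi⟩ := by simp [Fin.ext_iff]; omega
      simp [h, h1, h2]
    · have h1 : ¬ (j : ℕ) < i + 1 := by omega
      have h2 : ¬ (j : ℕ) < i := by omega
      have h3 : j ≠ ⟨i, hi⟩ := by simp [Fin.ext_iff]; omega
      simp [h1, h2, h3]
  rw [Finset.sum_congr rfl (fun j _ => key j), Finset.sum_add_distrib]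
  congr 1
  simp

lemma fval_update {n : ℕ} (w : Fin n → ℝ) (x : Fin n → Bool) (j : Fin n)
    (hx : x j = false) :
    fval w (Function.update x j true) = fval w x + w j := by
  unfold fval
  rw [← Finset.add_sum_erase _ _ (Finset.mem_univ j),
      ← Finset.add_sum_erase _ (fun k => w k * (if x k then 1 else 0)) (Finset.mem_univ j)]
  have : ∀ k ∈ Finset.univ.erase j,
      w k * (if Function.update x j true k then 1 else 0) = w k * (if x k then 1 else 0) := by
    intro k hk
    rw [Function.update_of_ne (Finset.ne_of_mem_erase hk)]
  rw [Finset.sum_congr rfl this]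
  simp [hx]
  ring

/-- Sampling a solution on a strictly higher fitness level (the set `G`) is at least
`1/n²` times as likely as sampling an equally good or better solution on the same
fitness level (the set `B`). -/
theorem stmt_8 (n : ℕ) (hn : 2 ≤ n)
    (w : Fin n → ℝ) (hwpos : ∀ j, 0 < w j)
    (hwsorted : ∀ j k : Fin n, j ≤ k → w k ≤ w j)
    (τ : Fin n → ℝ)
    (hbounds : ∀ j, 1 / (n : ℝ) ≤ τ j ∧ τ j ≤ 1 - 1 / (n : ℝ))
    (i : ℕ) (hi : i < n) (xstar : Fin n → Bool)
    (hlow : fA w i ≤ fval w xstar) (hhigh : fval w xstar < fA w (i + 1)) :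
    prob τ (Finset.univ.filter (fun x : Fin n → Bool =>
        fval w xstar ≤ fval w x ∧ fval w x < fA w (i + 1))) / (n : ℝ) ^ 2 ≤
    prob τ (Finset.univ.filter (fun x : Fin n → Bool => fA w (i + 1) ≤ fval w x)) := by
  have hn0 : (0 : ℝ) < n := by positivity
  set P : (Fin n → Bool) → ℝ := fun x => ∏ j, (if x j then τ j else 1 - τ j) with hP
  have hτpos : ∀ j, 0 < τ j := fun j => lt_of_lt_of_le (by positivity) (hbounds j).1
  have hτ1 : ∀ j, 0 ≤ 1 - τ j := by
    intro j
    have := (hbounds j).2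
    have h1n : 0 < 1 / (n : ℝ) := by positivity
    linarith
  have hPnonneg : ∀ x, 0 ≤ P x := by
    intro x
    apply Finset.prod_nonneg
    intro j _
    by_cases h : x j <;> simp [h, (hτpos j).le, hτ1 j]
  -- single-bit flip inequality
  have hflip : ∀ (x : Fin n → Bool) (j : Fin n), x j = false →
      P x ≤ n * P (Function.update x j true) := by
    intro x j hx
    have h1 : P x = (1 - τ j) * ∏ k ∈ Finset.univ.erase j, (if x k then τ k else 1 - τ k) := by
      simp only [hP]
      rw [← Finset.mul_prod_erase _ _ (Finset.mem_univ j), hx]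
      simp
    have h2 : P (Function.update x j true)
        = τ j * ∏ k ∈ Finset.univ.erase j, (if x k then τ k else 1 - τ k) := by
      simp only [hP]
      rw [← Finset.mul_prod_erase _ _ (Finset.mem_univ j)]
      simp only [Function.update_self]
      congr 1
      apply Finset.prod_congr rfl
      intro k hk
      rw [Function.update_of_ne (Finset.ne_of_mem_erase hk)]
    have hprodnn : 0 ≤ ∏ k ∈ Finset.univ.erase j, (if x k then τ k else 1 - τ k) := by
      apply Finset.prod_nonneg
      intro k _
      by_cases h : x k <;> simp [h, (hτpos k).le, hτ1 k]
    rw [h1, h2, ← mul_assoc]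
    apply mul_le_mul_of_nonneg_right _ hprodnn
    have hb := (hbounds j).1
    have h3 : (1 : ℝ) ≤ (n : ℝ) * τ j := by
      have := (div_le_iff₀ hn0).mp hb
      nlinarith
    have h4 := hτ1 j
    nlinarith
  -- every x with fval < fA (i+1) has a zero bit among the first i+1 positions
  have hex : ∀ x : Fin n → Bool, fval w x < fA w (i + 1) →
      ∃ j : Fin n, x j = false ∧ (j : ℕ) ≤ i := by
    intro x hx
    by_contra hcon
    push_neg at hcon
    have : fA w (i + 1) ≤ fval w x := by
      unfold fA fval
      apply Finset.sum_le_sum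
      intro j _
      by_cases hj : (j : ℕ) < i + 1
      · have : x j = true := by
          by_contra h
          have := hcon j (by simpa using h)
          omega
        simp [hj, this]
      · simp [hj]
        by_cases h : x j <;> simp [h, (hwpos j).le]
    linarith
  -- the chosen flip index
  have hnpos : 0 < n := by omega
  set J : (Fin n → Bool) → Fin n := fun x =>
    if h : ∃ j : Fin n, x j = false ∧ (j : ℕ) ≤ i then h.choose else ⟨0, hnpos⟩ with hJ
  set φ : (Fin n → Bool) → (Fin n → Bool) := fun x => Function.update x (J x) true with hφ
  set B := Finset.univ.filter (fun x : Fin n → Bool =>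
        fval w xstar ≤ fval w x ∧ fval w x < fA w (i + 1)) with hB
  set G := Finset.univ.filter (fun x : Fin n → Bool => fA w (i + 1) ≤ fval w x) with hG
  have hJspec : ∀ x ∈ B, x (J x) = false ∧ ((J x : ℕ) ≤ i) := by
    intro x hx
    rw [hB, Finset.mem_filter] at hx
    have h := hex x hx.2.2
    rw [hJ]
    simp only [dif_pos h]
    exact h.choose_spec
  have hmem : ∀ x ∈ B, φ x ∈ G := by
    intro x hx
    obtain ⟨hx0, hxi⟩ := hJspec x hx
    rw [hG, Finset.mem_filter]
    refine ⟨Finset.mem_univ _, ?_⟩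
    rw [hφ]
    simp only
    rw [fval_update w x (J x) hx0]
    have h1 : w ⟨i, hi⟩ ≤ w (J x) := hwsorted (J x) ⟨i, hi⟩ (by simp [Fin.le_def]; omega)
    have h2 : fA w i ≤ fval w x := by
      rw [hB, Finset.mem_filter] at hx
      linarith [hx.2.1]
    rw [fA_succ w i hi]
    linarith
  have hrec : ∀ x ∈ B, Function.update (φ x) (J x) false = x := by
    intro x hx
    obtain ⟨hx0, _⟩ := hJspec x hx
    funext k
    by_cases hk : k = J x
    · subst hk; simp [hx0]
    · simp [hφ, Function.update_of_ne hk]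
  set ψ : (Fin n → Bool) → (Fin n → Bool) × Fin n := fun x => (φ x, J x) with hψ
  have hinj : ∀ x ∈ B, ∀ y ∈ B, ψ x = ψ y → x = y := by
    intro x hx y hy hxy
    have h1 := hrec x hx
    have h2 := hrec y hy
    rw [hψ] at hxy
    simp only [Prod.mk.injEq] at hxy
    rw [← h1, ← h2, hxy.1, hxy.2]
  -- main chain
  have step1 : ∑ x ∈ B, P x ≤ ∑ x ∈ B, (n : ℝ) * P ((ψ x).1) := by
    apply Finset.sum_le_sum
    intro x hx
    exact hflip x (J x) (hJspec x hx).1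
  have step2 : ∑ x ∈ B, (n : ℝ) * P ((ψ x).1)
      = ∑ p ∈ B.image ψ, (n : ℝ) * P p.1 := by
    rw [Finset.sum_image]
    exact hinj
  have step3 : ∑ p ∈ B.image ψ, (n : ℝ) * P p.1
      ≤ ∑ p ∈ G ×ˢ (Finset.univ : Finset (Fin n)), (n : ℝ) * P p.1 := by
    apply Finset.sum_le_sum_of_subset_of_nonneg
    · intro p hp
      rw [Finset.mem_image] at hp
      obtain ⟨x, hx, rfl⟩ := hp
      rw [Finset.mem_product]
      exact ⟨hmem x hx, Finset.mem_univ _⟩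
    · intro p _ _
      exact mul_nonneg hn0.le (hPnonneg _)
  have step4 : ∑ p ∈ G ×ˢ (Finset.univ : Finset (Fin n)), (n : ℝ) * P p.1
      = (n : ℝ) ^ 2 * ∑ y ∈ G, P y := by
    rw [Finset.sum_product, Finset.mul_sum]
    apply Finset.sum_congr rfl
    intro y _
    have hc : ∀ j : Fin n, (n : ℝ) * P ((y, j)).1 = (n : ℝ) * P y := fun _ => rfl
    rw [Finset.sum_congr rfl (fun j _ => hc j), Finset.sum_const]
    simp only [Finset.card_univ, Fintype.card_fin, nsmul_eq_mul]
    ring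
  have : ∑ x ∈ B, P x ≤ (n : ℝ) ^ 2 * ∑ y ∈ G, P y := by
    calc ∑ x ∈ B, P x ≤ ∑ x ∈ B, (n : ℝ) * P ((ψ x).1) := step1
      _ = ∑ p ∈ B.image ψ, (n : ℝ) * P p.1 := step2
      _ ≤ ∑ p ∈ G ×ˢ (Finset.univ : Finset (Fin n)), (n : ℝ) * P p.1 := step3
      _ = (n : ℝ) ^ 2 * ∑ y ∈ G, P y := step4
  have hn2 : (0 : ℝ) < (n : ℝ) ^ 2 := by positivity
  rw [div_le_iff₀ hn2]
  unfold prob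
  show (∑ x ∈ B, P x) ≤ (∑ y ∈ G, P y) * (n : ℝ) ^ 2
  linarith
end

section
/- There is a constant c > 0 such that for every integer n ≥ 2, every integer 1 ≤ i ≤ n, and every pheromone vector τ with Σ_k τ_k ≥ (n−i)(1−1/n) + i/n: under the sampling distribution P_τ, the probability that the sampled bit string contains at least n−i+1 ones is at least c·i/n. (When i ones are still missing and the pheromone sum is at least v(a_{n−i}), the probability of sampling a strictly better OneMax solution is Ω(i/n).) -/
/-!
Let `X` be the number of ones and `V = ∑ τ_k (1 - τ_k)` its variance. The hypothesis says
`E X ≥ n - i - 1 + 2i/n`, so it suffices that `X` reaches `E X + 2`.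

If `V` is large, the fourth central moment is at most `3V² + V ≤ 5V²`, and a Paley–Zygmund type
argument (Hölder gives `E|X - E X| ≳ √V`, then Cauchy–Schwarz on the upper tail) shows
`P(X ≥ E X + 2) ≥ 1/80`.

If `V` is small, then `M = ∑ min(τ_k, 1 - τ_k) ≤ 2V` is bounded, so the most likely string
(bit `k` set iff `τ_k ≥ 1/2`) has probability at least `e^{-2M}`. It has `n - a` ones, where `a`
counts the bits with `τ_k < 1/2`. If `a < i` this string already succeeds. Otherwise the pheromone
sum forces those `a` bits to carry mass at least `a - i + (2i - a)/n ≥ i/n`, and `a ≤ 2i`; hence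
they split into `a - i + 1` disjoint groups of mass `≥ 1/4` each (a single group of mass `≥ i/n`
when `a = i`). Switching on one bit in every group gives distinct successful strings whose total
probability is at least `e^{-2M}` times the product of the group masses, i.e. `Ω(i/n)`.
-/

open Finset Function Real

lemma exp_neg_two_mul_le_one_sub_s14 {q : ℝ} (h₀ : 0 ≤ q) (h₁ : q ≤ 1 / 2) :
    exp (-(2 * q)) ≤ 1 - q := by
  rw [exp_neg, inv_le_comm₀ (exp_pos _) (by linarith)]
  calc (1 - q)⁻¹ ≤ 1 + 2 * q := by
        rw [inv_le_iff_one_le_mul₀ (by linarith)]; nlinarith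
    _ ≤ exp (2 * q) := by linarith [add_one_le_exp (2 * q)]

lemma exp_neg_two_mul_le_one_div_four_pow (h : ℕ) : exp (-(2 * h)) ≤ (1 / 4) ^ h := by
  have h4 : 4 ≤ exp 2 := by nlinarith [quadratic_le_exp_of_nonneg (zero_le_two (α := ℝ))]
  rw [show -(2 * (h : ℝ)) = h * (-2) by ring, exp_nat_mul]
  gcongr
  rw [exp_neg, inv_eq_one_div]
  exact one_div_le_one_div_of_le (by norm_num) h4

lemma min_le_two_mul_mul_one_sub {t : ℝ} (h₀ : 0 ≤ t) (h₁ : t ≤ 1) :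
    min t (1 - t) ≤ 2 * (t * (1 - t)) := by
  rcases le_total t (1 / 2) with ht | ht
  · rw [min_eq_left (by linarith)]; nlinarith
  · rw [min_eq_right (by linarith)]; nlinarith

lemma unit_bounds_of_pheromone_bounds {n : ℕ} {t : ℝ} (h : 1 / (n : ℝ) ≤ t ∧ t ≤ 1 - 1 / n) :
    0 ≤ t ∧ t ≤ 1 :=
  ⟨le_trans (by positivity) h.1, h.2.trans (by simp)⟩

section FourthMoment

variable {α : Type*} [Fintype α] {w f : α → ℝ}

lemma sum_mul_sq_pow_three_le (hw : ∀ x, 0 ≤ w x) :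
    (∑ x, w x * f x ^ 2) ^ 3 ≤ (∑ x, w x * f x ^ 4) * (∑ x, w x * |f x|) ^ 2 := by
  set V := ∑ x, w x * f x ^ 2
  set Q := ∑ x, w x * f x ^ 4
  set A := ∑ x, w x * |f x|
  set B := ∑ x, w x * |f x| ^ 3
  have hV : 0 ≤ V := sum_nonneg fun x _ => mul_nonneg (hw x) (sq_nonneg _)
  have hQ : 0 ≤ Q := sum_nonneg fun x _ => mul_nonneg (hw x) (by positivity)
  have hVAB : V ^ 2 ≤ A * B := sum_sq_le_sum_mul_sum_of_sq_le_mul univ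
    (fun x _ => mul_nonneg (hw x) (abs_nonneg _)) (fun x _ => mul_nonneg (hw x) (by positivity))
    (fun x _ => le_of_eq (by rw [← sq_abs (f x)]; ring))
  have hBVQ : B ^ 2 ≤ V * Q := sum_sq_le_sum_mul_sum_of_sq_le_mul univ
    (fun x _ => mul_nonneg (hw x) (sq_nonneg _)) (fun x _ => mul_nonneg (hw x) (by positivity))
    (fun x _ => le_of_eq (by
      rw [show (w x * |f x| ^ 3) ^ 2 = w x ^ 2 * (|f x| ^ 2) ^ 3 by ring, sq_abs]; ring))
  rcases hV.eq_or_lt with hV0 | hV0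
  · rw [← hV0, zero_pow three_ne_zero]; positivity
  · have : V ^ 4 ≤ V * (Q * A ^ 2) := by
      calc V ^ 4 = (V ^ 2) ^ 2 := by ring
        _ ≤ (A * B) ^ 2 := pow_le_pow_left₀ (sq_nonneg V) hVAB 2
        _ = A ^ 2 * B ^ 2 := by ring
        _ ≤ A ^ 2 * (V * Q) := mul_le_mul_of_nonneg_left hBVQ (sq_nonneg A)
        _ = V * (Q * A ^ 2) := by ring
    nlinarith [pow_pos hV0 3]

lemma one_div_eighty_le_sum_filter (hw : ∀ x, 0 ≤ w x) (hw1 : ∑ x, w x = 1)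
    (h1 : ∑ x, w x * f x = 0) (h4 : ∑ x, w x * f x ^ 4 ≤ 5 * (∑ x, w x * f x ^ 2) ^ 2)
    {t : ℝ} (ht : 0 < t) (htV : 80 * t ^ 2 ≤ ∑ x, w x * f x ^ 2) :
    1 / 80 ≤ ∑ x with t ≤ f x, w x := by
  set V := ∑ x, w x * f x ^ 2
  set A := ∑ x, w x * |f x|
  set S := ∑ x with t ≤ f x, w x * f x
  set P := ∑ x with t ≤ f x, w x
  have hV : 0 < V := by nlinarith
  have hA : 0 ≤ A := sum_nonneg fun x _ => mul_nonneg (hw x) (abs_nonneg _)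
  have hVA : V ≤ 5 * A ^ 2 := by
    have := sum_mul_sq_pow_three_le (f := f) hw
    nlinarith [pow_pos hV 2, mul_le_mul_of_nonneg_right h4 (sq_nonneg A)]
  have hAS : A / 2 ≤ t + S := by
    have hpt : ∀ x, (|f x| + f x) / 2 ≤ t + if t ≤ f x then f x else 0 := fun x => by
      split_ifs <;> cases abs_cases (f x) <;> linarith
    calc A / 2 = (A + ∑ x, w x * f x) / 2 := by rw [h1, add_zero]
      _ = ∑ x, w x * ((|f x| + f x) / 2) := by
          rw [← sum_add_distrib, sum_div]
          exact sum_congr rfl fun x _ => by ring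
      _ ≤ ∑ x, w x * (t + if t ≤ f x then f x else 0) :=
          sum_le_sum fun x _ => mul_le_mul_of_nonneg_left (hpt x) (hw x)
      _ = t + S := by
          simp only [mul_add, sum_add_distrib, ← sum_mul, hw1, one_mul, mul_ite, mul_zero,
            sum_ite, sum_const_zero, add_zero, S]
  have hSP : S ^ 2 ≤ P * V := by
    refine (sum_sq_le_sum_mul_sum_of_sq_le_mul _ (g := fun x => w x * f x ^ 2) (fun x _ => hw x)
      (fun x _ => mul_nonneg (hw x) (sq_nonneg _)) (fun x _ => le_of_eq (by ring))).trans ?_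
    exact mul_le_mul_of_nonneg_left (sum_le_sum_of_subset_of_nonneg (subset_univ _)
      fun x _ _ => mul_nonneg (hw x) (sq_nonneg _)) (sum_nonneg fun x _ => hw x)
  have h4t : 4 * t ≤ A := by nlinarith
  have hS : A / 4 ≤ S := by linarith
  have : 1 / 80 * V ≤ P * V := by nlinarith [pow_le_pow_left₀ (by positivity) hS 2]
  exact le_of_mul_le_mul_right this hV

end FourthMoment

section Grouping

variable {ι : Type*} [DecidableEq ι] {p : ι → ℝ}

lemma exists_subset_sum_mem_Icc {B : Finset ι} (hp : ∀ k ∈ B, 0 ≤ p k ∧ p k ≤ 1 / 2)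
    (hB : 1 / 4 ≤ ∑ k ∈ B, p k) : ∃ G ⊆ B, ∑ k ∈ G, p k ∈ Set.Icc (1 / 4 : ℝ) (3 / 4) := by
  obtain ⟨G, hGB, hmin⟩ := exists_minimal_le_of_wellFoundedLT
    (fun G : Finset ι => G ⊆ B ∧ 1 / 4 ≤ ∑ k ∈ G, p k) B ⟨subset_rfl, hB⟩
  obtain ⟨-, hG⟩ := hmin.prop
  obtain ⟨k, hk⟩ : G.Nonempty := nonempty_of_sum_ne_zero (by linarith : (0 : ℝ) < ∑ k ∈ G, p k).ne'
  have herase : ∑ j ∈ G.erase k, p j < 1 / 4 := by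
    by_contra! h
    exact hmin.not_prop_of_lt (erase_ssubset hk) ⟨(erase_subset k G).trans hGB, h⟩
  refine ⟨G, hGB, hG, ?_⟩
  rw [← add_sum_erase G p hk]
  linarith [hp k (hGB hk)]

lemma exists_pairwise_disjoint_quarter_le_sum (h : ℕ) {B : Finset ι}
    (hp : ∀ k ∈ B, 0 ≤ p k ∧ p k ≤ 1 / 2) (hB : 3 / 4 * h - 1 / 2 ≤ ∑ k ∈ B, p k) :
    ∃ G : Fin h → Finset ι, (∀ g, G g ⊆ B) ∧ Pairwise (Disjoint on G) ∧
      ∀ g, 1 / 4 ≤ ∑ k ∈ G g, p k := by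
  induction h generalizing B with
  | zero => exact ⟨finZeroElim, finZeroElim, finZeroElim, finZeroElim⟩
  | succ h ih =>
    push_cast at hB
    obtain ⟨G₀, hG₀B, hG₀, hG₀'⟩ := exists_subset_sum_mem_Icc hp
      (by nlinarith [(Nat.cast_nonneg h : (0 : ℝ) ≤ h)])
    obtain ⟨G, hGB, hG, hGsum⟩ := ih (B := B \ G₀) (fun k hk => hp k (mem_sdiff.1 hk).1)
      (by rw [sum_sdiff_eq_sub hG₀B]; linarith)
    have hdisj : ∀ g, Disjoint G₀ (G g) := fun g => disjoint_of_subset_right (hGB g) disjoint_sdiff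
    refine ⟨Fin.cons G₀ G, Fin.cases hG₀B fun g => (hGB g).trans sdiff_subset, ?_,
      Fin.cases hG₀ hGsum⟩
    intro g g' hne
    cases g using Fin.cases <;> cases g' using Fin.cases
    · exact absurd rfl hne
    · exact hdisj _
    · exact (hdisj _).symm
    · exact hG fun h => hne (congrArg _ h)

lemma exists_pairwise_disjoint_mul_le_prod_sum (h : ℕ) {B : Finset ι}
    (hp : ∀ k ∈ B, 0 ≤ p k ∧ p k ≤ 1 / 2) {ε : ℝ} (hε₀ : 0 ≤ ε) (hε₁ : ε ≤ 1)
    (hεB : ε ≤ ∑ k ∈ B, p k) (hB : (h : ℝ) - 1 ≤ ∑ k ∈ B, p k) :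
    ∃ G : Fin h → Finset ι, (∀ g, G g ⊆ B) ∧ Pairwise (Disjoint on G) ∧
      ε * (1 / 4) ^ h ≤ ∏ g, ∑ k ∈ G g, p k := by
  match h, hB with
  | 0, _ => exact ⟨finZeroElim, finZeroElim, finZeroElim, by simpa using hε₁⟩
  | 1, _ => exact ⟨fun _ => B, fun _ => subset_rfl, Subsingleton.pairwise, by simp; linarith⟩
  | h + 2, hB =>
    obtain ⟨G, hGB, hG, hGsum⟩ := exists_pairwise_disjoint_quarter_le_sum (h + 2) hp
      (by push_cast at hB ⊢; linarith)
    refine ⟨G, hGB, hG, ?_⟩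
    calc ε * (1 / 4) ^ (h + 2) ≤ 1 * (1 / 4) ^ (h + 2) := by gcongr
      _ = ∏ _g : Fin (h + 2), (1 / 4 : ℝ) := by simp
      _ ≤ ∏ g, ∑ k ∈ G g, p k := prod_le_prod (fun _ _ => by norm_num) fun g _ => hGsum g

end Grouping

section BernoulliWeight

variable {ι : Type*} [Fintype ι] (τ : ι → ℝ)

noncomputable def bernoulliWeight (x : ι → Bool) : ℝ :=
  ∏ j, if x j then τ j else 1 - τ j

variable {τ} in
lemma bernoulliWeight_nonneg (hτ : ∀ j, 0 ≤ τ j ∧ τ j ≤ 1) (x : ι → Bool) :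
    0 ≤ bernoulliWeight τ x :=
  prod_nonneg fun j _ => by
    cases x j
    · simpa using (hτ j).2
    · simpa using (hτ j).1

variable [DecidableEq ι]

lemma sum_bernoulliWeight : ∑ x, bernoulliWeight τ x = 1 := by
  simp [bernoulliWeight, ← Fintype.prod_sum (fun j (b : Bool) => if b = true then τ j else 1 - τ j)]

lemma sum_filter_apply_eq_false_of_update (k : ι) (Φ : (ι → Bool) → ℝ)
    (hΦ : ∀ x b, Φ (update x k b) = Φ x) :
    ∑ x with x k = false, Φ x = ∑ x with x k = true, Φ x :=
  sum_nbij' (fun x => update x k true) (fun x => update x k false)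
    (by simp) (by simp)
    (fun x hx => by simp [← (mem_filter.1 hx).2])
    (fun x hx => by simp [← (mem_filter.1 hx).2])
    (fun x _ => (hΦ x true).symm)

lemma sum_mul_apply_of_update (k : ι) (g : Bool → ℝ) (Φ : (ι → Bool) → ℝ)
    (hΦ : ∀ x b, Φ (update x k b) = Φ x) :
    ∑ x, g (x k) * Φ x = (g true + g false) * ∑ x with x k = true, Φ x := by
  have hfiber : ∀ b, ∑ x with x k = b, g (x k) * Φ x = g b * ∑ x with x k = b, Φ x :=
    fun b => by rw [mul_sum]; exact sum_congr rfl fun x hx => by rw [(mem_filter.1 hx).2]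
  rw [← sum_filter_add_sum_filter_not univ (fun x => x k = true)]
  simp only [Bool.not_eq_true]
  rw [hfiber, hfiber, sum_filter_apply_eq_false_of_update k Φ hΦ, add_mul]

lemma sum_bernoulliWeight_mul_apply_mul (k : ι) (f : Bool → ℝ) (F : (ι → Bool) → ℝ)
    (hF : ∀ x b, F (update x k b) = F x) :
    ∑ x, bernoulliWeight τ x * (f (x k) * F x)
      = (τ k * f true + (1 - τ k) * f false) * ∑ x, bernoulliWeight τ x * F x := by
  set R : (ι → Bool) → ℝ := fun x => ∏ j ∈ univ.erase k, if x j then τ j else 1 - τ j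
  have hR : ∀ x b, R (update x k b) = R x := fun x b =>
    prod_congr rfl fun j hj => by rw [update_of_ne (ne_of_mem_erase hj)]
  have hw : ∀ x, bernoulliWeight τ x = (if x k then τ k else 1 - τ k) * R x := fun x =>
    (mul_prod_erase univ _ (mem_univ k)).symm
  set S := ∑ x with x k = true, R x * F x
  have key := fun f : Bool → ℝ => sum_mul_apply_of_update k
    (fun b => (if b then τ k else 1 - τ k) * f b) (fun x => R x * F x)
    (fun x b => by simp only [hR, hF])
  have h1 : ∑ x, ((if x k then τ k else 1 - τ k) * f (x k)) * (R x * F x)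
      = (τ k * f true + (1 - τ k) * f false) * S := by simpa using key f
  -- the case `f = 1` identifies `S` with `∑ x, bernoulliWeight τ x * F x`
  have h2 : ∑ x, ((if x k then τ k else 1 - τ k) * 1) * (R x * F x) = S := by
    simpa using key fun _ => 1
  calc ∑ x, bernoulliWeight τ x * (f (x k) * F x)
      = ∑ x, ((if x k then τ k else 1 - τ k) * f (x k)) * (R x * F x) :=
        sum_congr rfl fun x _ => by rw [hw]; ring
    _ = (τ k * f true + (1 - τ k) * f false) * S := h1
    _ = _ := by
        rw [← h2]
        exact congrArg _ (sum_congr rfl fun x _ => by rw [hw]; ring)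

end BernoulliWeight

section CenteredMoments

variable {ι : Type*} [Fintype ι] [DecidableEq ι] (τ : ι → ℝ)

noncomputable def centeredCount (s : Finset ι) (x : ι → Bool) : ℝ :=
  ∑ j ∈ s, ((if x j then 1 else 0) - τ j)

noncomputable def centeredMoment (s : Finset ι) (p : ℕ) : ℝ :=
  ∑ x, bernoulliWeight τ x * centeredCount τ s x ^ p

lemma centeredMoment_zero (s : Finset ι) : centeredMoment τ s 0 = 1 := by
  simp [centeredMoment, sum_bernoulliWeight]

lemma centeredMoment_insert {k : ι} {s : Finset ι} (hk : k ∉ s) (p : ℕ) :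
    centeredMoment τ (insert k s) p = ∑ j ∈ range (p + 1),
      p.choose j * (τ k * (1 - τ k) ^ j + (1 - τ k) * (-τ k) ^ j) * centeredMoment τ s (p - j) := by
  have hC : ∀ x b, centeredCount τ s (update x k b) = centeredCount τ s x :=
    fun x b => sum_congr rfl fun j hj => by
      rw [update_of_ne (ne_of_mem_of_not_mem hj hk)]
  have hins : ∀ x, centeredCount τ (insert k s) x
      = ((if x k then 1 else 0) - τ k) + centeredCount τ s x := fun x => sum_insert hk
  conv_lhs => rw [centeredMoment]; simp only [hins, add_pow, mul_sum]
  rw [sum_comm]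
  refine sum_congr rfl fun j _ => ?_
  have hfactor := sum_bernoulliWeight_mul_apply_mul τ k (fun b => ((if b then 1 else 0) - τ k) ^ j)
    (fun x => centeredCount τ s x ^ (p - j)) (fun x b => by rw [hC])
  simp only [if_true, Bool.false_eq_true, if_false, zero_sub] at hfactor
  rw [centeredMoment, mul_assoc, ← hfactor, mul_sum]
  exact sum_congr rfl fun x _ => by ring

lemma centeredMoment_one (s : Finset ι) : centeredMoment τ s 1 = 0 := by
  induction s using Finset.induction_on with
  | empty => simp [centeredMoment, centeredCount]
  | insert k s hk ih =>
    simp [centeredMoment_insert τ hk, sum_range_succ, ih, centeredMoment_zero]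
    ring

lemma centeredMoment_two (s : Finset ι) :
    centeredMoment τ s 2 = ∑ j ∈ s, τ j * (1 - τ j) := by
  induction s using Finset.induction_on with
  | empty => simp [centeredMoment, centeredCount]
  | insert k s hk ih =>
    simp [centeredMoment_insert τ hk, sum_range_succ, ih, centeredMoment_zero,
      centeredMoment_one, sum_insert hk]
    ring

lemma centeredMoment_four_le (s : Finset ι) :
    centeredMoment τ s 4 ≤ 3 * (∑ j ∈ s, τ j * (1 - τ j)) ^ 2 + ∑ j ∈ s, τ j * (1 - τ j) := by
  induction s using Finset.induction_on with
  | empty => simp [centeredMoment, centeredCount]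
  | insert k s hk ih =>
    have hk4 : τ k * (1 - τ k) ^ 4 + (1 - τ k) * τ k ^ 4
        = τ k * (1 - τ k) - 3 * (τ k * (1 - τ k)) ^ 2 := by ring
    have hexp : centeredMoment τ (insert k s) 4 = centeredMoment τ s 4
        + 6 * (τ k * (1 - τ k)) * ∑ j ∈ s, τ j * (1 - τ j)
        + (τ k * (1 - τ k) ^ 4 + (1 - τ k) * τ k ^ 4) := by
      simp [centeredMoment_insert τ hk, sum_range_succ, centeredMoment_zero, centeredMoment_one,
        centeredMoment_two, Nat.choose]
      ring
    rw [hexp, hk4, sum_insert hk]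
    nlinarith [sq_nonneg (τ k * (1 - τ k))]

end CenteredMoments

section Selection

variable {ι : Type*} [Fintype ι] [DecidableEq ι] {τ : ι → ℝ}

lemma bernoulliWeight_mul_prod_le (hτ : ∀ j, 0 ≤ τ j ∧ τ j ≤ 1) (x : ι → Bool) {T : Finset ι}
    (hT : ∀ j ∈ T, x j = false) :
    bernoulliWeight τ x * ∏ j ∈ T, τ j ≤ bernoulliWeight τ (fun j => x j || decide (j ∈ T)) := by
  set g : ι → ℝ := fun j => if x j then τ j else 1 - τ j
  have hg : ∀ j, 0 ≤ g j := fun j => by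
    simp only [g]; split_ifs <;> linarith [hτ j]
  have hx : bernoulliWeight τ x = (∏ j ∈ T, (1 - τ j)) * ∏ j ∈ Tᶜ, g j := by
    rw [bernoulliWeight, ← prod_mul_prod_compl T]
    exact congrArg (· * _) (prod_congr rfl fun j hj => by simp [hT j hj])
  have hy : bernoulliWeight τ (fun j => x j || decide (j ∈ T))
      = (∏ j ∈ T, τ j) * ∏ j ∈ Tᶜ, g j := by
    rw [bernoulliWeight, ← prod_mul_prod_compl T]
    congr 1
    · exact prod_congr rfl fun j hj => by simp [hj]
    · exact prod_congr rfl fun j hj => by simp [(mem_compl.1 hj), g]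
  have hT1 : ∏ j ∈ T, (1 - τ j) ≤ 1 :=
    prod_le_one (fun j _ => sub_nonneg.2 (hτ j).2) fun j _ => by linarith [hτ j]
  rw [hx, hy, mul_comm]
  calc (∏ j ∈ T, τ j) * ((∏ j ∈ T, (1 - τ j)) * ∏ j ∈ Tᶜ, g j)
      ≤ (∏ j ∈ T, τ j) * (1 * ∏ j ∈ Tᶜ, g j) := by
        gcongr
        · exact prod_nonneg fun j _ => (hτ j).1
        · exact prod_nonneg fun j _ => hg j
    _ = _ := by rw [one_mul]

lemma card_filter_or_decide_mem (x : ι → Bool) {T : Finset ι} (hT : ∀ j ∈ T, x j = false) :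
    (univ.filter fun k => (x k || decide (k ∈ T)) = true).card
      = (univ.filter fun k => x k = true).card + T.card := by
  rw [← card_union_of_disjoint]
  · congr 1; ext k; simp
  · exact disjoint_left.2 fun k hk hkT => by simp [hT k hkT] at hk

lemma bernoulliWeight_mul_prod_sum_le {κ : Type*} [Fintype κ] [DecidableEq κ]
    (hτ : ∀ j, 0 ≤ τ j ∧ τ j ≤ 1) (x : ι → Bool)
    (G : κ → Finset ι) (hG : Pairwise (Disjoint on G)) (hGx : ∀ g, ∀ j ∈ G g, x j = false) :
    bernoulliWeight τ x * ∏ g, ∑ j ∈ G g, τ j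
      ≤ ∑ y with (univ.filter fun k => x k = true).card + Fintype.card κ
          ≤ (univ.filter fun k => y k = true).card, bernoulliWeight τ y := by
  set φ : (κ → ι) → ι → Bool := fun c j => x j || decide (j ∈ univ.image c)
  have hinj : ∀ c ∈ Fintype.piFinset G, Injective c := fun c hc g g' hgg' => by
    by_contra hne
    exact disjoint_left.1 (hG hne) (Fintype.mem_piFinset.1 hc g)
      (hgg' ▸ Fintype.mem_piFinset.1 hc g')
  have himage : ∀ c ∈ Fintype.piFinset G, ∀ j ∈ univ.image c, x j = false := fun c hc j hj => by
    obtain ⟨g, -, rfl⟩ := mem_image.1 hj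
    exact hGx g _ (Fintype.mem_piFinset.1 hc g)
  have hφinj : Set.InjOn φ (Fintype.piFinset G) := fun c hc c' hc' hcc' => funext fun g => by
    have hcg := Fintype.mem_piFinset.1 hc g
    have : c g ∈ univ.image c' := by
      simpa [φ, hGx g _ hcg] using congrFun hcc' (c g)
    obtain ⟨g', -, hg'⟩ := mem_image.1 this
    obtain rfl : g' = g := by
      by_contra hne
      exact disjoint_left.1 (hG hne) (Fintype.mem_piFinset.1 hc' g') (hg' ▸ hcg)
    exact hg'.symm
  calc bernoulliWeight τ x * ∏ g, ∑ j ∈ G g, τ j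
      = ∑ c ∈ Fintype.piFinset G, bernoulliWeight τ x * ∏ j ∈ univ.image c, τ j := by
        rw [prod_univ_sum, mul_sum]
        exact sum_congr rfl fun c hc => by rw [prod_image fun g _ g' _ h => hinj c hc h]
    _ ≤ ∑ c ∈ Fintype.piFinset G, bernoulliWeight τ (φ c) :=
        sum_le_sum fun c hc => bernoulliWeight_mul_prod_le hτ x (himage c hc)
    _ = ∑ y ∈ (Fintype.piFinset G).image φ, bernoulliWeight τ y := (sum_image hφinj).symm
    _ ≤ _ := by
        refine sum_le_sum_of_subset_of_nonneg (fun y hy => ?_)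
          fun y _ _ => bernoulliWeight_nonneg hτ y
        obtain ⟨c, hc, rfl⟩ := mem_image.1 hy
        rw [mem_filter, card_filter_or_decide_mem x (himage c hc),
          card_image_of_injective _ (hinj c hc), card_univ]
        exact ⟨mem_univ _, le_rfl⟩

end Selection

section ModePoint

variable {ι : Type*}

noncomputable def modePoint (τ : ι → ℝ) (k : ι) : Bool := decide (1 / 2 ≤ τ k)

variable {τ : ι → ℝ}

@[simp]
lemma modePoint_eq_false_iff {k : ι} : modePoint τ k = false ↔ τ k < 1 / 2 := by
  simp [modePoint]

variable [Fintype ι]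

lemma card_filter_modePoint_add_card_filter_lt_half :
    (univ.filter fun k => modePoint τ k = true).card + (univ.filter fun k => τ k < 1 / 2).card
      = Fintype.card ι := by
  simpa using card_filter_add_card_filter_not (s := univ) fun k => modePoint τ k = true

lemma exp_neg_le_bernoulliWeight_modePoint (hτ : ∀ j, 0 ≤ τ j ∧ τ j ≤ 1) :
    exp (-(2 * ∑ k, min (τ k) (1 - τ k))) ≤ bernoulliWeight τ (modePoint τ) := by
  rw [mul_sum, ← sum_neg_distrib, exp_sum]
  refine prod_le_prod (fun _ _ => (exp_pos _).le) fun k _ => ?_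
  by_cases hk : 1 / 2 ≤ τ k
  · have := exp_neg_two_mul_le_one_sub_s14 (sub_nonneg.2 (hτ k).2) (by linarith)
    rw [modePoint, decide_eq_true hk, if_pos rfl, min_eq_right (by linarith)]
    linarith
  · rw [modePoint, decide_eq_false hk, if_neg Bool.false_ne_true, min_eq_left (by linarith)]
    exact exp_neg_two_mul_le_one_sub_s14 (hτ k).1 (by linarith)

lemma sum_filter_lt_half_le_sum_min (hτ : ∀ j, 0 ≤ τ j ∧ τ j ≤ 1) :
    ∑ k with τ k < 1 / 2, τ k ≤ ∑ k, min (τ k) (1 - τ k) :=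
  calc ∑ k with τ k < 1 / 2, τ k = ∑ k with τ k < 1 / 2, min (τ k) (1 - τ k) :=
        sum_congr rfl fun k hk => (min_eq_left (by linarith [(mem_filter.1 hk).2])).symm
    _ ≤ _ := sum_le_sum_of_subset_of_nonneg (subset_univ _) fun k _ _ =>
        le_min (hτ k).1 (sub_nonneg.2 (hτ k).2)

end ModePoint

section Pheromone

variable {n i : ℕ} {τ : Fin n → ℝ}

lemma card_sub_mul_add_le_sum (hτ : ∀ k, τ k ≤ 1 - 1 / (n : ℝ))
    (hsum : ((n : ℝ) - i) * (1 - 1 / n) + i / n ≤ ∑ k, τ k) (B : Finset (Fin n)) :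
    ((B.card : ℝ) - i) * (1 - 1 / n) + i / n ≤ ∑ k ∈ B, τ k := by
  have hB : B.card ≤ n := by simpa using B.card_le_univ
  have hBc : ∑ k ∈ Bᶜ, τ k ≤ ((n : ℝ) - B.card) * (1 - 1 / n) := by
    calc ∑ k ∈ Bᶜ, τ k ≤ ∑ _k ∈ Bᶜ, (1 - 1 / (n : ℝ)) := sum_le_sum fun k _ => hτ k
      _ = ((n : ℝ) - B.card) * (1 - 1 / n) := by
        rw [sum_const, card_compl, Fintype.card_fin, nsmul_eq_mul, Nat.cast_sub hB]
  rw [← sum_add_sum_compl B] at hsum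
  linarith

lemma card_filter_lt_half_le (hτ : ∀ k, 1 / (n : ℝ) ≤ τ k ∧ τ k ≤ 1 - 1 / (n : ℝ))
    (hsum : ((n : ℝ) - i) * (1 - 1 / n) + i / n ≤ ∑ k, τ k) :
    (univ.filter fun k => τ k < 1 / 2).card ≤ 2 * i := by
  set B := univ.filter fun k => τ k < 1 / 2
  by_contra! hB
  obtain ⟨k, hk⟩ : B.Nonempty := card_pos.1 (by omega)
  have hn : 1 / (n : ℝ) < 1 / 2 := ((hτ k).1).trans_lt (mem_filter.1 hk).2
  have hBsum : ∑ k ∈ B, τ k ≤ B.card * (1 / 2) := by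
    simpa using sum_le_sum fun k (hk : k ∈ B) => ((mem_filter.1 hk).2).le
  have := card_sub_mul_add_le_sum (fun k => (hτ k).2) hsum B
  have hB' : (2 * i : ℝ) < B.card := by exact_mod_cast hB
  rw [div_eq_mul_one_div (i : ℝ)] at this
  nlinarith [mul_pos (sub_pos.2 hB') (sub_pos.2 hn)]

lemma card_filter_lt_half_sub_le_sum (hτ : ∀ k, 1 / (n : ℝ) ≤ τ k ∧ τ k ≤ 1 - 1 / (n : ℝ))
    (hsum : ((n : ℝ) - i) * (1 - 1 / n) + i / n ≤ ∑ k, τ k) :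
    ((univ.filter fun k => τ k < 1 / 2).card : ℝ) - i ≤ ∑ k with τ k < 1 / 2, τ k := by
  set B := univ.filter fun k => τ k < 1 / 2
  have hB2i : (B.card : ℝ) ≤ 2 * i := by exact_mod_cast card_filter_lt_half_le hτ hsum
  have := card_sub_mul_add_le_sum (fun k => (hτ k).2) hsum B
  have : ((B.card : ℝ) - i) * (1 - 1 / n) + i / n = B.card - i + (2 * i - B.card) / n := by
    field_simp; ring
  have : (0 : ℝ) ≤ (2 * i - B.card) / n := div_nonneg (sub_nonneg.2 hB2i) (Nat.cast_nonneg n)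
  linarith

lemma div_le_sum_filter_lt_half (hτ : ∀ k, τ k ≤ 1 - 1 / (n : ℝ))
    (hsum : ((n : ℝ) - i) * (1 - 1 / n) + i / n ≤ ∑ k, τ k)
    (hi : i ≤ (univ.filter fun k => τ k < 1 / 2).card) :
    (i : ℝ) / n ≤ ∑ k with τ k < 1 / 2, τ k := by
  have hiB : (i : ℝ) ≤ (univ.filter fun k => τ k < 1 / 2).card := by exact_mod_cast hi
  have hn : 1 / (n : ℝ) ≤ 1 := by simpa using Nat.cast_inv_le_one (α := ℝ) n
  have := card_sub_mul_add_le_sum hτ hsum (univ.filter fun k => τ k < 1 / 2)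
  nlinarith [mul_nonneg (sub_nonneg.2 hiB) (sub_nonneg.2 hn)]

lemma exp_mul_div_le_prob_of_le_card (hin : i ≤ n)
    (hτ : ∀ k, 1 / (n : ℝ) ≤ τ k ∧ τ k ≤ 1 - 1 / (n : ℝ))
    (hsum : ((n : ℝ) - i) * (1 - 1 / n) + i / n ≤ ∑ k, τ k)
    (hi : i ≤ (univ.filter fun k => τ k < 1 / 2).card) :
    exp (-(4 * ∑ k, min (τ k) (1 - τ k) + 2)) * i / n ≤ prob τ (univ.filter fun x : Fin n → Bool =>
      n - i + 1 ≤ (univ.filter fun k => x k = true).card) := by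
  have hτ₀₁ : ∀ k, 0 ≤ τ k ∧ τ k ≤ 1 := fun k => unit_bounds_of_pheromone_bounds (hτ k)
  have hcard := card_filter_modePoint_add_card_filter_lt_half (τ := τ)
  rw [Fintype.card_fin] at hcard
  set M := ∑ k, min (τ k) (1 - τ k)
  set B := univ.filter fun k => τ k < 1 / 2
  set h := B.card - i + 1
  have hε₀ : 0 ≤ (i : ℝ) / n := by positivity
  have hε₁ : (i : ℝ) / n ≤ 1 := div_le_one_of_le₀ (by exact_mod_cast hin) (Nat.cast_nonneg n)
  have hhB : (h : ℝ) - 1 ≤ ∑ k ∈ B, τ k := by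
    have := card_filter_lt_half_sub_le_sum hτ hsum
    push_cast [h, Nat.cast_sub hi]
    linarith
  obtain ⟨G, hGB, hG, hprod⟩ := exists_pairwise_disjoint_mul_le_prod_sum h
    (fun k (hk : k ∈ B) => ⟨(hτ₀₁ k).1, (mem_filter.1 hk).2.le⟩) hε₀ hε₁
    (div_le_sum_filter_lt_half (fun k => (hτ k).2) hsum hi) hhB
  have hsel := bernoulliWeight_mul_prod_sum_le hτ₀₁ (modePoint τ) G hG
    fun g k hk => modePoint_eq_false_iff.2 (mem_filter.1 (hGB g hk)).2
  rw [Fintype.card_fin] at hsel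
  rw [show (univ.filter fun k => modePoint τ k = true).card + h = n - i + 1 by omega] at hsel
  have hpow : exp (-(2 * (M + 1))) ≤ (1 / 4) ^ h := by
    refine le_trans (exp_le_exp.2 ?_) (exp_neg_two_mul_le_one_div_four_pow h)
    linarith [sum_filter_lt_half_le_sum_min hτ₀₁]
  have hw := bernoulliWeight_nonneg hτ₀₁ (modePoint τ)
  calc exp (-(4 * M + 2)) * i / n = exp (-(2 * M)) * (i / n * exp (-(2 * (M + 1)))) := by
        rw [mul_div_assoc, mul_left_comm, ← exp_add]; ring_nf
    _ ≤ bernoulliWeight τ (modePoint τ) * (i / n * (1 / 4) ^ h) :=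
        mul_le_mul (exp_neg_le_bernoulliWeight_modePoint hτ₀₁)
          (mul_le_mul_of_nonneg_left hpow hε₀) (by positivity) hw
    _ ≤ _ := (mul_le_mul_of_nonneg_left hprod hw).trans hsel

lemma exp_mul_div_le_prob (hin : i ≤ n)
    (hτ : ∀ k, 1 / (n : ℝ) ≤ τ k ∧ τ k ≤ 1 - 1 / (n : ℝ))
    (hsum : ((n : ℝ) - i) * (1 - 1 / n) + i / n ≤ ∑ k, τ k) :
    exp (-(4 * ∑ k, min (τ k) (1 - τ k) + 2)) * i / n ≤ prob τ (univ.filter fun x : Fin n → Bool =>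
      n - i + 1 ≤ (univ.filter fun k => x k = true).card) := by
  rcases le_or_gt i (univ.filter fun k => τ k < 1 / 2).card with hi | hi
  · exact exp_mul_div_le_prob_of_le_card hin hτ hsum hi
  have hτ₀₁ : ∀ k, 0 ≤ τ k ∧ τ k ≤ 1 := fun k => unit_bounds_of_pheromone_bounds (hτ k)
  have hM : 0 ≤ ∑ k, min (τ k) (1 - τ k) :=
    sum_nonneg fun k _ => le_min (hτ₀₁ k).1 (sub_nonneg.2 (hτ₀₁ k).2)
  have hcard := card_filter_modePoint_add_card_filter_lt_half (τ := τ)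
  rw [Fintype.card_fin] at hcard
  -- the mode point alone already has enough ones
  calc exp (-(4 * ∑ k, min (τ k) (1 - τ k) + 2)) * i / n
      ≤ exp (-(2 * ∑ k, min (τ k) (1 - τ k))) * 1 := by
        rw [mul_div_assoc]
        gcongr
        · linarith
        · exact div_le_one_of_le₀ (by exact_mod_cast hin) (Nat.cast_nonneg n)
    _ ≤ bernoulliWeight τ (modePoint τ) := by
        rw [mul_one]; exact exp_neg_le_bernoulliWeight_modePoint hτ₀₁
    _ ≤ _ := single_le_sum (fun x _ => bernoulliWeight_nonneg hτ₀₁ x)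
        (mem_filter.2 ⟨mem_univ _, by omega⟩)

lemma one_div_eighty_le_prob (hin : i ≤ n) (hτ : ∀ k, 0 ≤ τ k ∧ τ k ≤ 1)
    (hsum : (n : ℝ) - i - 1 ≤ ∑ k, τ k) (hV : 320 ≤ ∑ k, τ k * (1 - τ k)) :
    1 / 80 ≤ prob τ (univ.filter fun x : Fin n → Bool =>
      n - i + 1 ≤ (univ.filter fun k => x k = true).card) := by
  have hcard : ∀ x : Fin n → Bool,
      ((univ.filter fun k => x k = true).card : ℝ) = centeredCount τ univ x + ∑ k, τ k := by
    intro x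
    simp [centeredCount, sum_sub_distrib, sum_boole]
  have hsub : (univ.filter fun x => 2 ≤ centeredCount τ univ x)
      ⊆ univ.filter fun x : Fin n → Bool => n - i + 1 ≤ (univ.filter fun k => x k = true).card := by
    intro x hx
    rw [mem_filter] at hx ⊢
    refine ⟨mem_univ x, ?_⟩
    have : ((n - i + 1 : ℕ) : ℝ) ≤ (univ.filter fun k => x k = true).card := by
      push_cast [Nat.cast_sub hin, hcard]
      linarith [hx.2]
    exact_mod_cast this
  have h2 := centeredMoment_two τ univ
  have h4 := centeredMoment_four_le τ univ
  calc (1 : ℝ) / 80 ≤ ∑ x with 2 ≤ centeredCount τ univ x, bernoulliWeight τ x :=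
        one_div_eighty_le_sum_filter (bernoulliWeight_nonneg hτ) (sum_bernoulliWeight τ)
          (by simpa [centeredMoment] using centeredMoment_one τ univ)
          (by rw [centeredMoment] at h2 h4; rw [h2]; nlinarith)
          two_pos (by rw [centeredMoment] at h2; rw [h2]; linarith)
    _ ≤ _ := sum_le_sum_of_subset_of_nonneg hsub fun x _ _ => bernoulliWeight_nonneg hτ x

end Pheromone

/-- There is a constant `c > 0` such that whenever `i` ones are still missing and the
pheromone sum is at least `v(a_{n-i}) = (n-i)(1-1/n) + i/n`, the probability of
sampling a bit string with at least `n-i+1` ones is at least `c·i/n`. -/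
theorem stmt_14 : ∃ c : ℝ, 0 < c ∧
    ∀ (n : ℕ), 2 ≤ n → ∀ (i : ℕ), 1 ≤ i → i ≤ n →
    ∀ (τ : Fin n → ℝ), (∀ k, 1 / (n : ℝ) ≤ τ k ∧ τ k ≤ 1 - 1 / (n : ℝ)) →
    ((n : ℝ) - (i : ℝ)) * (1 - 1 / (n : ℝ)) + (i : ℝ) / (n : ℝ) ≤ ∑ k, τ k →
    c * (i : ℝ) / (n : ℝ) ≤ prob τ (Finset.univ.filter (fun x : Fin n → Bool =>
      n - i + 1 ≤ (Finset.univ.filter (fun k => x k = true)).card)) := by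
  refine ⟨exp (-2600), exp_pos _, fun n _ i hi hin τ hτ hsum => ?_⟩
  have hτ01 : ∀ k, 0 ≤ τ k ∧ τ k ≤ 1 := fun k => unit_bounds_of_pheromone_bounds (hτ k)
  have hn : (0 : ℝ) < n := by exact_mod_cast (show 0 < n by omega)
  have hin' : (i : ℝ) / n ≤ 1 := (div_le_one hn).2 (by exact_mod_cast hin)
  rcases le_or_gt 320 (∑ k, τ k * (1 - τ k)) with hV | hV
  · have hsum' : (n : ℝ) - i - 1 ≤ ∑ k, τ k := by
      have : ((n : ℝ) - i) * (1 - 1 / n) + i / n = n - i - 1 + 2 * i / n := by field_simp; ring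
      linarith [div_nonneg (by positivity : (0 : ℝ) ≤ 2 * i) hn.le]
    have hc : exp (-2600) ≤ (1 : ℝ) / 80 := by
      rw [exp_neg, inv_eq_one_div]
      exact one_div_le_one_div_of_le (by norm_num) (by linarith [add_one_le_exp (2600 : ℝ)])
    calc exp (-2600) * i / n ≤ 1 / 80 * 1 := by
          rw [mul_div_assoc]; exact mul_le_mul hc hin' (by positivity) (by norm_num)
      _ ≤ _ := by rw [mul_one]; exact one_div_eighty_le_prob hin hτ01 hsum' hV
  · have hM : ∑ k, min (τ k) (1 - τ k) ≤ 2 * ∑ k, τ k * (1 - τ k) := by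
      rw [mul_sum]
      exact sum_le_sum fun k _ => min_le_two_mul_mul_one_sub (hτ01 k).1 (hτ01 k).2
    calc exp (-2600) * i / n ≤ exp (-(4 * ∑ k, min (τ k) (1 - τ k) + 2)) * i / n := by
          gcongr; linarith
      _ ≤ _ := exp_mul_div_le_prob hin hτ hsum
end
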